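/- arXiv:2605.11848 — 3 statements merged into one kernel-verified Lean document; each statement's English description precedes it below -/
import Mathlib

section
/- Let G be a Hausdorff topological group, let 𝒢 ⊂ G be a subset, and let 𝒰 ⊂ G be a nonempty open set with compact closure such that cl(𝒰) ⊂ 𝒢^{−1}𝒰. Then for every nonempty subset 𝒵 ⊂ G with compact closure, cl(𝒰𝒵) ⊂ 𝒢^{−1}𝒰𝒵. -/
open Filter Topology Matrix Pointwise

namespace Paper

variable {𝒜 : Type*} [Fintype 𝒜] [DecidableEq 𝒜]

/-- The space of bi-infinite sequences over the alphabet `𝒜`. -/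
abbrev Seq (𝒜 : Type*) := ℤ → 𝒜

/-- The left shift map. -/
def shift (x : Seq 𝒜) : Seq 𝒜 := fun i => x (i + 1)

/-- The inverse of the left shift map. -/
def shiftInv (x : Seq 𝒜) : Seq 𝒜 := fun i => x (i - 1)

/-- `n`-th power of the shift, `n : ℤ`. -/
def shiftZ (n : ℤ) (x : Seq 𝒜) : Seq 𝒜 := fun i => x (i + n)

/-- The subshift of finite type with transition rule `H`. -/
def SFT (H : 𝒜 → 𝒜 → Prop) : Set (Seq 𝒜) := {x | ∀ i : ℤ, H (x i) (x (i + 1))}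

open Classical in
/-- dist(x,y) = 2^{-n}, n = min{|i| : x i ≠ y i}. -/
noncomputable def seqDist (x y : Seq 𝒜) : ℝ :=
  if x = y then 0
  else (2 : ℝ) ^ (-((sInf {n : ℕ | ∃ i : ℤ, i.natAbs = n ∧ x i ≠ y i} : ℕ) : ℤ))

/-- Transitivity: some point has dense forward orbit in `Σ_H`. -/
def IsTransitive (H : 𝒜 → 𝒜 → Prop) : Prop :=
  ∃ x ∈ SFT H, ∀ y ∈ SFT H, ∀ ε : ℝ, 0 < ε → ∃ n : ℕ, seqDist (shift^[n] x) y < ε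

/-- The number of words of length `n` appearing in sequences of `X`. -/
noncomputable def wordCount (X : Set (Seq 𝒜)) (n : ℕ) : ℕ :=
  Nat.card {w : Fin n → 𝒜 // ∃ x ∈ X, ∃ k : ℤ, ∀ i : Fin n, x (k + (i : ℤ)) = w i}

/-- Topological entropy of the shift restricted to `X`, via word counting. -/
noncomputable def entropy (X : Set (Seq 𝒜)) : ℝ :=
  Filter.atTop.limsup fun n : ℕ => Real.log (wordCount X n : ℝ) / (n : ℝ)

/-- The Euclidean norm on `ℝ^d`. -/
noncomputable def eNorm {d : ℕ} (u : Fin d → ℝ) : ℝ := Real.sqrt (∑ i, (u i) ^ 2)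

/-- The operator norm of a matrix, induced by the Euclidean norm. -/
noncomputable def opNorm {d : ℕ} (M : Matrix (Fin d) (Fin d) ℝ) : ℝ :=
  sSup {r : ℝ | ∃ u : Fin d → ℝ, eNorm u = 1 ∧ r = eNorm (M.mulVec u)}

/-- Forward iterates of a cocycle over the shift: `A_0 = 1`, `A_{n+1}(x) = A_n(σ x) * A x`. -/
def iterN {M : Type*} [Monoid M] (A : Seq 𝒜 → M) : ℕ → Seq 𝒜 → M
  | 0, _ => 1
  | n + 1, x => iterN A n (shift x) * A x

/-- Iterates of a cocycle over the shift, indexed by `ℤ`. -/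
noncomputable def iterZ {Gr : Type*} [Group Gr] (A : Seq 𝒜 → Gr) (n : ℤ) (x : Seq 𝒜) : Gr :=
  if 0 ≤ n then iterN A n.toNat x
  else (iterN A (-n).toNat (shiftInv^[(-n).toNat] x))⁻¹

variable {d : ℕ}

/-- Underlying matrix of an element of `GL(d,ℝ)`. -/
def glMat (g : GL (Fin d) ℝ) : Matrix (Fin d) (Fin d) ℝ := g.val

/-- `B(A,κ)`: points of `Σ_H` whose full orbit is fiberwise bounded by `κ`. -/
noncomputable def BSet (H : 𝒜 → 𝒜 → Prop) (A : Seq 𝒜 → GL (Fin d) ℝ) (κ : ℝ) :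
    Set (Seq 𝒜) :=
  {x ∈ SFT H | ∀ n : ℤ, opNorm (glMat (iterZ A n x)) ≤ κ ∧
    opNorm (glMat (iterZ A n x)⁻¹) ≤ κ}

/-- The `C⁰` distance between two cocycles over `Σ_H`. -/
noncomputable def dC0 (H : 𝒜 → 𝒜 → Prop) (A B : Seq 𝒜 → GL (Fin d) ℝ) : ℝ :=
  sSup {r : ℝ | ∃ x ∈ SFT H, r = opNorm (glMat (A x) - glMat (B x))}

/-- The `C^α` Hölder seminorm of a matrix-valued map on `Σ_H`. -/
noncomputable def holderSemi (H : 𝒜 → 𝒜 → Prop) (f : Seq 𝒜 → Matrix (Fin d) (Fin d) ℝ)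
    (α : ℝ) : ℝ :=
  sSup {r : ℝ | ∃ x ∈ SFT H, ∃ y ∈ SFT H, x ≠ y ∧ r = opNorm (f x - f y) / seqDist x y ^ α}

/-- A cocycle is `α`-Hölder if its `C^α` seminorm is finite. -/
def IsHolder (H : 𝒜 → 𝒜 → Prop) (A : Seq 𝒜 → GL (Fin d) ℝ) (α : ℝ) : Prop :=
  ∃ C : ℝ, ∀ x ∈ SFT H, ∀ y ∈ SFT H,
    opNorm (glMat (A x) - glMat (A y)) ≤ C * seqDist x y ^ α

/-- The `C^α` distance between two cocycles over `Σ_H`. -/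
noncomputable def dCalpha (H : 𝒜 → 𝒜 → Prop) (A B : Seq 𝒜 → GL (Fin d) ℝ) (α : ℝ) : ℝ :=
  dC0 H A B + holderSemi H (fun x => glMat (A x) - glMat (B x)) α

/-- Continuity (with respect to `seqDist`) of a matrix-valued map on `Σ_H`. -/
def MatContinuousOn (H : 𝒜 → 𝒜 → Prop) (f : Seq 𝒜 → Matrix (Fin d) (Fin d) ℝ) : Prop :=
  ∀ x ∈ SFT H, ∀ ε : ℝ, 0 < ε → ∃ δ : ℝ, 0 < δ ∧
    ∀ y ∈ SFT H, seqDist x y < δ → opNorm (f x - f y) < ε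

/-- `(σ, A)` is continuously conjugate to an isometric cocycle. -/
def ConjIsometric (H : 𝒜 → 𝒜 → Prop) (A : Seq 𝒜 → GL (Fin d) ℝ) : Prop :=
  ∃ P : Seq 𝒜 → GL (Fin d) ℝ, MatContinuousOn H (fun x => glMat (P x)) ∧
    ∀ x ∈ SFT H, glMat ((P (shift x))⁻¹ * A x * P x) ∈ Matrix.orthogonalGroup (Fin d) ℝ

/-- `(σ, A)` admits a dominated splitting: a continuous invariant splitting
`ℝ^d = E₁ ⊕ E₂` (encoded by a continuous field of nontrivial idempotents `π` with
`E₁ = range π`, `E₂ = ker π`) with uniformly separated growth rates. -/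
def HasDominatedSplitting (H : 𝒜 → 𝒜 → Prop) (A : Seq 𝒜 → GL (Fin d) ℝ) : Prop :=
  ∃ π : Seq 𝒜 → Matrix (Fin d) (Fin d) ℝ,
    MatContinuousOn H π ∧
    (∀ x ∈ SFT H, π x * π x = π x ∧ π x ≠ 0 ∧ π x ≠ 1) ∧
    (∀ x ∈ SFT H, glMat (A x) * π x = π (shift x) * glMat (A x)) ∧
    ∃ C : ℝ, 0 < C ∧ ∃ lam : ℝ, 0 < lam ∧ lam < 1 ∧
      ∀ x ∈ SFT H, ∀ n : ℕ, 1 ≤ n →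
        ∀ u ∈ LinearMap.range (π x).mulVecLin, ∀ v ∈ LinearMap.ker (π x).mulVecLin,
          eNorm ((glMat (iterN A n x)).mulVec u) * eNorm v ≤
            C * lam ^ n * (eNorm u * eNorm ((glMat (iterN A n x)).mulVec v))

/-- `H`-admissible finite words. -/
def Adm (H : 𝒜 → 𝒜 → Prop) (w : List 𝒜) : Prop := w.Chain' H

/-- The word `(x_{-k}, …, x_k)` read in the sequence `x`. -/
def window (k : ℕ) (x : Seq 𝒜) : List 𝒜 :=
  (List.range (2 * k + 1)).map fun i => x ((i : ℤ) - (k : ℤ))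

/-- `w` is a transition from `a` to `b`: an admissible word with prefix `a` and suffix `b`. -/
def IsTransition (H : 𝒜 → 𝒜 → Prop) (a b w : List 𝒜) : Prop :=
  Adm H w ∧ a <+: w ∧ b <:+ w

/-- The product `A_[w⟩ = φ(w⁽ⁿ⁻²ᵏ⁾) ⋯ φ(w⁽¹⁾)` of a locally constant cocycle
represented by `φ` along the walk `w`. -/
def transProd {M : Type*} [Monoid M] (φ : List 𝒜 → M) (k : ℕ) (w : List 𝒜) : M :=
  (((List.range (w.length - 2 * k)).map fun i => φ ((w.drop i).take (2 * k + 1))).reverse).prod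

section SubgroupCocycle

variable {G : Subgroup (GL (Fin d) ℝ)}

/-- Underlying matrix of an element of the subgroup `G ⊂ GL(d,ℝ)`. -/
def subMat (g : ↥G) : Matrix (Fin d) (Fin d) ℝ := ((g : GL (Fin d) ℝ) : Matrix (Fin d) (Fin d) ℝ)

/-- `B(A,κ)` for `G`-valued cocycles. -/
noncomputable def BSetSub (H : 𝒜 → 𝒜 → Prop) (A : Seq 𝒜 → ↥G) (κ : ℝ) : Set (Seq 𝒜) :=
  {x ∈ SFT H | ∀ n : ℤ, opNorm (subMat (iterZ A n x)) ≤ κ ∧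
    opNorm (subMat (iterZ A n x)⁻¹) ≤ κ}

/-- `C⁰` distance for `G`-valued cocycles. -/
noncomputable def dC0Sub (H : 𝒜 → 𝒜 → Prop) (A B : Seq 𝒜 → ↥G) : ℝ :=
  sSup {r : ℝ | ∃ x ∈ SFT H, r = opNorm (subMat (A x) - subMat (B x))}

/-- `α`-Hölder condition for `G`-valued cocycles. -/
def IsHolderSub (H : 𝒜 → 𝒜 → Prop) (A : Seq 𝒜 → ↥G) (α : ℝ) : Prop :=
  ∃ C : ℝ, ∀ x ∈ SFT H, ∀ y ∈ SFT H,
    opNorm (subMat (A x) - subMat (A y)) ≤ C * seqDist x y ^ α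

/-- `C^α` distance for `G`-valued cocycles. -/
noncomputable def dCalphaSub (H : 𝒜 → 𝒜 → Prop) (A B : Seq 𝒜 → ↥G) (α : ℝ) : ℝ :=
  dC0Sub H A B + holderSemi H (fun x => subMat (A x) - subMat (B x)) α

/-- The covering condition for a locally constant `G`-cocycle represented by `φ`
(depending on positions in `⟦-k, k⟧`). -/
def CoveringCond (H : 𝒜 → 𝒜 → Prop) (φ : List 𝒜 → ↥G) (k : ℕ) : Prop :=
  ∃ U : Set ↥G, U.Nonempty ∧ IsOpen U ∧ IsCompact (closure U) ∧
    ∃ A' : Set (List 𝒜), A'.Nonempty ∧ (∀ a ∈ A', Adm H a ∧ a.length = 2 * k + 1) ∧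
      ∀ a ∈ A', closure U ⊆
        ⋃ b ∈ A', ⋃ w ∈ {w : List 𝒜 | IsTransition H a b w}, (fun u => (transProd φ k w)⁻¹ * u) '' U

/-- `w₁` is a proper prefix of `w₂`. -/
def ProperPrefix (w₁ w₂ : List 𝒜) : Prop := w₁ <+: w₂ ∧ w₁ ≠ w₂

/-- The multiple covering condition of `m` layers for a locally constant `G`-cocycle
represented by `φ` (depending on positions in `⟦-k, k⟧`). -/
def MultiCoveringCond (H : 𝒜 → 𝒜 → Prop) (φ : List 𝒜 → ↥G) (k : ℕ) (m : ℕ) : Prop :=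
  ∃ n : ℕ, 0 < n ∧ ∃ U : Fin n → Set ↥G,
    (∀ ι, (U ι).Nonempty ∧ IsOpen (U ι) ∧ IsCompact (closure (U ι))) ∧
    ∃ A' : Set (List 𝒜), A'.Nonempty ∧ (∀ a ∈ A', Adm H a ∧ a.length = 2 * k + 1) ∧
      ∃ Λ : List 𝒜 → Fin n → Fin m → Set (List 𝒜),
        (∀ a ∈ A', ∀ ι jj, (Λ a ι jj).Nonempty ∧
          Λ a ι jj ⊆ {w : List 𝒜 | ∃ b ∈ A', IsTransition H a b w}) ∧
        (∀ a ∈ A', ∀ ι : Fin n, ∀ j₁ j₂ : Fin m, ∀ w₁ ∈ Λ a ι j₁, ∀ w₂ ∈ Λ a ι j₂,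
          ¬ ProperPrefix w₁ w₂) ∧
        (∀ a ∈ A', ∀ ι jj, closure (U ι) ⊆
          ⋃ w ∈ Λ a ι jj, (fun u => (transProd φ k w)⁻¹ * u) '' (⋃ ι', U ι'))

/-- The ball of radius `r` around the identity in `G`. -/
noncomputable def GBall (G : Subgroup (GL (Fin d) ℝ)) (r : ℝ) : Set ↥G :=
  {g : ↥G | opNorm (subMat g - 1) < r}

end SubgroupCocycle

/-- `P_[w] = g_k ⋯ g_1` for `w = (g_1, …, g_k)`. -/
def prodMap {M : Type*} [Monoid M] {k : ℕ} (w : Fin k → M) : M :=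
  ((List.ofFn w).reverse).prod

/-- The local unstable set of `y` in `Σ_H`. -/
def WuLoc (H : 𝒜 → 𝒜 → Prop) (y : Seq 𝒜) : Set (Seq 𝒜) :=
  {z ∈ SFT H | ∀ i : ℤ, i ≤ 0 → z i = y i}

theorem closure_mul_subset_of_isCompact_closure {G : Type*} [Group G] [TopologicalSpace G]
    [IsTopologicalGroup G] {s : Set G} (hs : IsCompact (closure s)) (t : Set G) :
    closure (s * t) ⊆ closure s * closure t :=
  closure_minimal (Set.mul_subset_mul subset_closure subset_closure)
    (isClosed_closure.mul_left_of_isCompact hs)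

theorem statement9_general {G : Type*} [Group G] [TopologicalSpace G] [IsTopologicalGroup G]
    (𝒢 : Set G) (𝒰 : Set G) (h𝒰open : IsOpen 𝒰)
    (h𝒰cpt : IsCompact (closure 𝒰)) (hcov : closure 𝒰 ⊆ 𝒢⁻¹ * 𝒰)
    (𝒵 : Set G) :
    closure (𝒰 * 𝒵) ⊆ 𝒢⁻¹ * 𝒰 * 𝒵 :=
  calc closure (𝒰 * 𝒵) ⊆ closure 𝒰 * closure 𝒵 :=
        closure_mul_subset_of_isCompact_closure h𝒰cpt 𝒵
    _ ⊆ 𝒢⁻¹ * 𝒰 * closure 𝒵 := Set.mul_subset_mul_right hcov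
    _ = 𝒢⁻¹ * 𝒰 * 𝒵 := by rw [mul_assoc, h𝒰open.mul_closure, ← mul_assoc]

/-- Remark 3.2. In a Hausdorff topological group, if an open set `𝒰`
with compact closure satisfies `cl(𝒰) ⊆ 𝒢⁻¹𝒰`, then for every nonempty `𝒵` with compact
closure, `cl(𝒰𝒵) ⊆ 𝒢⁻¹𝒰𝒵`. -/
theorem statement9 {G : Type*} [Group G] [TopologicalSpace G] [IsTopologicalGroup G]
    [T2Space G] (𝒢 : Set G) (𝒰 : Set G) (h𝒰ne : 𝒰.Nonempty) (h𝒰open : IsOpen 𝒰)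
    (h𝒰cpt : IsCompact (closure 𝒰)) (hcov : closure 𝒰 ⊆ 𝒢⁻¹ * 𝒰)
    (𝒵 : Set G) (h𝒵ne : 𝒵.Nonempty) (h𝒵cpt : IsCompact (closure 𝒵)) :
    closure (𝒰 * 𝒵) ⊆ 𝒢⁻¹ * 𝒰 * 𝒵 :=
  statement9_general 𝒢 𝒰 h𝒰open h𝒰cpt hcov 𝒵

end Paper
end

section
/- For every transitive subshift of finite type σ: Σ_H → Σ_H with positive topological entropy, there exists a continuous cocycle A: Σ_H → SL(2,ℝ) such that sup{‖A_n(x)‖ : x ∈ Σ_H, n ∈ ℤ} < ∞ (so every orbit is fiberwise bounded), yet (σ, A) is not continuously conjugate to an isometric cocycle. -/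
open Filter Topology Matrix Pointwise

namespace Paper

variable {𝒜 : Type*} [Fintype 𝒜] [DecidableEq 𝒜]

variable {d : ℕ}

/-! ### Auxiliary development for Statement 12 -/
set_option linter.unusedSectionVars false

section S12Aux

open Real

/-- agreement window lemmas for seqDist -/
lemma seqDist_comm (x y : Seq 𝒜) : seqDist x y = seqDist y x := by
  unfold seqDist
  have hset : {n : ℕ | ∃ i : ℤ, i.natAbs = n ∧ x i ≠ y i}
      = {n : ℕ | ∃ i : ℤ, i.natAbs = n ∧ y i ≠ x i} := by
    ext n; constructor <;> (rintro ⟨i, h1, h2⟩; exact ⟨i, h1, h2.symm⟩)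
  rw [hset]
  by_cases h : x = y
  · simp [h]
  · rw [if_neg h, if_neg (fun hh => h hh.symm)]

lemma seqDist_nonneg (x y : Seq 𝒜) : 0 ≤ seqDist x y := by
  unfold seqDist
  split_ifs
  · exact le_refl 0
  · positivity

lemma zpow_neg_pos (R : ℕ) : (0:ℝ) < (2:ℝ) ^ (-(R:ℤ)) := by positivity

/-- if close, then agree on a window -/
lemma agree_of_seqDist_lt {x y : Seq 𝒜} {R : ℕ}
    (h : seqDist x y < (2:ℝ) ^ (-(R:ℤ))) : ∀ i : ℤ, i.natAbs ≤ R → x i = y i := by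
  intro i hiR
  by_cases hxy : x = y
  · rw [hxy]
  · by_contra hne
    unfold seqDist at h
    rw [if_neg hxy] at h
    have hlt : -((sInf {n : ℕ | ∃ i : ℤ, i.natAbs = n ∧ x i ≠ y i} : ℕ) : ℤ) < -(R:ℤ) :=
      (zpow_lt_zpow_iff_right₀ one_lt_two).mp h
    have hle : sInf {n : ℕ | ∃ i : ℤ, i.natAbs = n ∧ x i ≠ y i} ≤ i.natAbs :=
      Nat.sInf_le ⟨i, rfl, hne⟩
    omega
    
/-- if agree on a window, then close -/
lemma seqDist_le_of_agree {x y : Seq 𝒜} {R : ℕ}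
    (h : ∀ i : ℤ, i.natAbs < R → x i = y i) : seqDist x y ≤ (2:ℝ) ^ (-(R:ℤ)) := by
  by_cases hxy : x = y
  · unfold seqDist; rw [if_pos hxy]; positivity
  · unfold seqDist; rw [if_neg hxy]
    have hne : {n : ℕ | ∃ i : ℤ, i.natAbs = n ∧ x i ≠ y i}.Nonempty := by
      obtain ⟨i, hi⟩ := Function.ne_iff.mp hxy
      exact ⟨i.natAbs, i, rfl, hi⟩
    obtain ⟨i, hieq, hine⟩ := Nat.sInf_mem hne
    have hR : R ≤ sInf {n : ℕ | ∃ i : ℤ, i.natAbs = n ∧ x i ≠ y i} := by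
      rw [← hieq]
      by_contra hc
      exact hine (h i (by omega))
    exact zpow_le_zpow_right₀ one_le_two (by omega)

lemma shift_iterate_apply (x : Seq 𝒜) (n : ℕ) (i : ℤ) : (shift^[n] x) i = x (i + n) := by
  induction n generalizing i with
  | zero => simp
  | succ n ih =>
    rw [Function.iterate_succ_apply']
    show (shift^[n] x) (i + 1) = _
    rw [ih]
    congr 1
    push_cast
    ring

lemma shiftInv_iterate_apply (x : Seq 𝒜) (n : ℕ) (i : ℤ) : (shiftInv^[n] x) i = x (i - n) := by
  induction n generalizing i with
  | zero => simp
  | succ n ih =>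
    rw [Function.iterate_succ_apply']
    show (shiftInv^[n] x) (i - 1) = _
    rw [ih]
    congr 1
    push_cast
    ring

lemma shift_shiftInv_iterate (x : Seq 𝒜) (n : ℕ) : shift^[n] (shiftInv^[n] x) = x := by
  funext i
  rw [shift_iterate_apply, shiftInv_iterate_apply]
  congr 1; ring

lemma SFT_shift {H : 𝒜 → 𝒜 → Prop} {x : Seq 𝒜} (hx : x ∈ SFT H) : shift x ∈ SFT H := by
  intro i
  show H (x (i+1)) (x (i+1+1))
  exact hx (i+1)

lemma SFT_shiftInv {H : 𝒜 → 𝒜 → Prop} {x : Seq 𝒜} (hx : x ∈ SFT H) : shiftInv x ∈ SFT H := by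
  intro i
  show H (x (i-1)) (x (i+1-1))
  have : i + 1 - 1 = (i-1) + 1 := by ring
  rw [this]
  exact hx (i-1)

lemma SFT_shift_iterate {H : 𝒜 → 𝒜 → Prop} {x : Seq 𝒜} (hx : x ∈ SFT H) (n : ℕ) :
    shift^[n] x ∈ SFT H := by
  induction n with
  | zero => exact hx
  | succ n ih => rw [Function.iterate_succ_apply']; exact SFT_shift ih

lemma SFT_shiftInv_iterate {H : 𝒜 → 𝒜 → Prop} {x : Seq 𝒜} (hx : x ∈ SFT H) (n : ℕ) :
    shiftInv^[n] x ∈ SFT H := by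
  induction n with
  | zero => exact hx
  | succ n ih => rw [Function.iterate_succ_apply']; exact SFT_shiftInv ih

/-! ### eNorm and opNorm lemmas (d = 2) -/

lemma eNorm_two (u : Fin 2 → ℝ) : eNorm u = Real.sqrt (u 0 ^ 2 + u 1 ^ 2) := by
  simp [eNorm, Fin.sum_univ_two]

lemma sq_le_sum_two (u : Fin 2 → ℝ) (i : Fin 2) : u i ^ 2 ≤ u 0 ^ 2 + u 1 ^ 2 := by
  have h0 := sq_nonneg (u 0); have h1 := sq_nonneg (u 1)
  have hi : i = 0 ∨ i = 1 := by omega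
  rcases hi with h | h <;> rw [h] <;> linarith

lemma abs_le_eNorm (u : Fin 2 → ℝ) (i : Fin 2) : |u i| ≤ eNorm u := by
  rw [eNorm_two]
  have : |u i| = Real.sqrt ((u i)^2) := by rw [Real.sqrt_sq_eq_abs]
  rw [this]
  exact Real.sqrt_le_sqrt (sq_le_sum_two u i)

lemma eNorm_le_sum_abs (u : Fin 2 → ℝ) : eNorm u ≤ |u 0| + |u 1| := by
  rw [eNorm_two]
  have h : u 0 ^ 2 + u 1 ^ 2 ≤ (|u 0| + |u 1|)^2 := by
    have := abs_nonneg (u 0); have := abs_nonneg (u 1)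
    nlinarith [sq_abs (u 0), sq_abs (u 1), mul_nonneg (abs_nonneg (u 0)) (abs_nonneg (u 1))]
  calc Real.sqrt (u 0 ^2 + u 1 ^2) ≤ Real.sqrt ((|u 0| + |u 1|)^2) := Real.sqrt_le_sqrt h
    _ = |u 0| + |u 1| := Real.sqrt_sq (by positivity)

lemma eNorm_nonneg (u : Fin 2 → ℝ) : 0 ≤ eNorm u := Real.sqrt_nonneg _

lemma opNorm_le {M : Matrix (Fin 2) (Fin 2) ℝ} {C : ℝ}
    (h : ∀ u : Fin 2 → ℝ, eNorm u = 1 → eNorm (M.mulVec u) ≤ C) (hC : 0 ≤ C) :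
    opNorm M ≤ C := by
  apply Real.sSup_le _ hC
  rintro r ⟨u, hu, rfl⟩
  exact h u hu

lemma mulVec_two (M : Matrix (Fin 2) (Fin 2) ℝ) (u : Fin 2 → ℝ) :
    M.mulVec u = ![M 0 0 * u 0 + M 0 1 * u 1, M 1 0 * u 0 + M 1 1 * u 1] := by
  funext i
  fin_cases i <;> simp [Matrix.mulVec, dotProduct, Fin.sum_univ_two]

lemma opNorm_bddAbove (M : Matrix (Fin 2) (Fin 2) ℝ) :
    BddAbove {r : ℝ | ∃ u : Fin 2 → ℝ, eNorm u = 1 ∧ r = eNorm (M.mulVec u)} := by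
  use |M 0 0| + |M 0 1| + |M 1 0| + |M 1 1|
  rintro r ⟨u, hu, rfl⟩
  have h0 : |u 0| ≤ 1 := hu ▸ abs_le_eNorm u 0
  have h1 : |u 1| ≤ 1 := hu ▸ abs_le_eNorm u 1
  calc eNorm (M.mulVec u) ≤ |(M.mulVec u) 0| + |(M.mulVec u) 1| := eNorm_le_sum_abs _
    _ ≤ (|M 0 0| + |M 0 1|) + (|M 1 0| + |M 1 1|) := by
        rw [mulVec_two]
        simp only [Matrix.cons_val_zero, Matrix.cons_val_one, Matrix.head_cons]
        have b0 : |M 0 0 * u 0 + M 0 1 * u 1| ≤ |M 0 0| + |M 0 1| := by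
          calc |M 0 0 * u 0 + M 0 1 * u 1| ≤ |M 0 0 * u 0| + |M 0 1 * u 1| := abs_add_le _ _
            _ = |M 0 0| * |u 0| + |M 0 1| * |u 1| := by rw [abs_mul, abs_mul]
            _ ≤ |M 0 0| * 1 + |M 0 1| * 1 := by gcongr
            _ = |M 0 0| + |M 0 1| := by ring
        have b1 : |M 1 0 * u 0 + M 1 1 * u 1| ≤ |M 1 0| + |M 1 1| := by
          calc |M 1 0 * u 0 + M 1 1 * u 1| ≤ |M 1 0 * u 0| + |M 1 1 * u 1| := abs_add_le _ _
            _ = |M 1 0| * |u 0| + |M 1 1| * |u 1| := by rw [abs_mul, abs_mul]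
            _ ≤ |M 1 0| * 1 + |M 1 1| * 1 := by gcongr
            _ = |M 1 0| + |M 1 1| := by ring
        exact add_le_add b0 b1
    _ = _ := by ring

lemma abs_entry_le_opNorm (M : Matrix (Fin 2) (Fin 2) ℝ) (i j : Fin 2) :
    |M i j| ≤ opNorm M := by
  classical
  set u : Fin 2 → ℝ := fun k => if k = j then 1 else 0 with hu
  have hnorm : eNorm u = 1 := by
    rw [eNorm_two]
    fin_cases j <;> simp [hu]
  have hmem : eNorm (M.mulVec u) ∈ {r : ℝ | ∃ u : Fin 2 → ℝ, eNorm u = 1 ∧ r = eNorm (M.mulVec u)} :=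
    ⟨u, hnorm, rfl⟩
  have hval : (M.mulVec u) i = M i j := by
    rw [mulVec_two]
    fin_cases j <;> fin_cases i <;> simp [hu]
  calc |M i j| = |(M.mulVec u) i| := by rw [hval]
    _ ≤ eNorm (M.mulVec u) := abs_le_eNorm _ _
    _ ≤ opNorm M := le_csSup (opNorm_bddAbove M) hmem

lemma opNorm_zero : opNorm (0 : Matrix (Fin 2) (Fin 2) ℝ) ≤ 0 := by
  apply opNorm_le _ le_rfl
  intro u _
  rw [Matrix.zero_mulVec]
  have : eNorm (0 : Fin 2 → ℝ) = 0 := by rw [eNorm_two]; norm_num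
  rw [this]

end S12Aux

section S12Dm

open Real

/-- The diagonal matrix diag(e^r, e^{-r}). -/
noncomputable def Dm (r : ℝ) : Matrix (Fin 2) (Fin 2) ℝ := !![Real.exp r, 0; 0, Real.exp (-r)]

lemma Dm_mul (r s : ℝ) : Dm r * Dm s = Dm (r + s) := by
  unfold Dm
  rw [Matrix.mul_fin_two]
  congr 1 <;> simp [← Real.exp_add] <;> ring_nf

lemma Dm_zero : Dm 0 = 1 := by
  unfold Dm
  rw [Matrix.one_fin_two]
  simp

lemma Dm_det (r : ℝ) : (Dm r).det = 1 := by
  unfold Dm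
  rw [Matrix.det_fin_two_of, ← Real.exp_add]
  simp

lemma Dm_transpose (r : ℝ) : (Dm r)ᵀ = Dm r := by
  unfold Dm
  ext i j
  fin_cases i <;> fin_cases j <;> simp [Matrix.transpose_apply]

lemma Dm_entries (r : ℝ) : Dm r 0 0 = Real.exp r ∧ Dm r 0 1 = 0 ∧ Dm r 1 0 = 0 ∧
    Dm r 1 1 = Real.exp (-r) := by
  unfold Dm; simp

/-- `Dm r` as an element of `GL(2,ℝ)`. -/
noncomputable def DmGL (r : ℝ) : GL (Fin 2) ℝ :=
  ⟨Dm r, Dm (-r), by rw [Dm_mul]; simp [Dm_zero], by rw [Dm_mul]; simp [Dm_zero]⟩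

lemma glMat_DmGL (r : ℝ) : glMat (DmGL r) = Dm r := rfl

lemma glMat_mul (g h : GL (Fin 2) ℝ) : glMat (g * h) = glMat g * glMat h := rfl

lemma glMat_one : glMat (1 : GL (Fin 2) ℝ) = 1 := rfl

lemma glMat_mul_inv (g : GL (Fin 2) ℝ) : glMat g * glMat g⁻¹ = 1 := by
  rw [← glMat_mul, mul_inv_cancel]; rfl

lemma glMat_inv_mul (g : GL (Fin 2) ℝ) : glMat g⁻¹ * glMat g = 1 := by
  rw [← glMat_mul, inv_mul_cancel]; rfl

lemma glMat_inv_of_eq_Dm {g : GL (Fin 2) ℝ} {r : ℝ} (h : glMat g = Dm r) :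
    glMat g⁻¹ = Dm (-r) := by
  have h1 : Dm (-r) * (glMat g * glMat g⁻¹) = Dm (-r) := by rw [glMat_mul_inv, mul_one]
  have h2 : Dm (-r) * glMat g = 1 := by rw [h, Dm_mul]; simp [Dm_zero]
  rw [← mul_assoc, h2, one_mul] at h1
  exact h1

/-- operator norm of a diagonal 2×2 matrix -/
lemma opNorm_diag_le {a b C : ℝ} (ha : |a| ≤ C) (hb : |b| ≤ C) :
    opNorm !![a, 0; 0, b] ≤ C := by
  have hC : 0 ≤ C := le_trans (abs_nonneg a) ha
  apply opNorm_le _ hC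
  intro u hu
  have hmv : (!![a, 0; 0, b]).mulVec u = ![a * u 0, b * u 1] := by
    rw [mulVec_two]; simp
  rw [hmv, eNorm_two]
  have h1 : (![a * u 0, b * u 1] : Fin 2 → ℝ) 0 = a * u 0 := rfl
  have h2 : (![a * u 0, b * u 1] : Fin 2 → ℝ) 1 = b * u 1 := rfl
  rw [h1, h2]
  have hub : (a * u 0) ^ 2 + (b * u 1) ^ 2 ≤ C ^ 2 * (u 0 ^ 2 + u 1 ^ 2) := by
    have ha2 : a ^ 2 ≤ C ^ 2 := sq_le_sq' (by linarith [neg_abs_le a, abs_nonneg a]) (le_trans (le_abs_self a) ha)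
    have hb2 : b ^ 2 ≤ C ^ 2 := sq_le_sq' (by linarith [neg_abs_le b, abs_nonneg b]) (le_trans (le_abs_self b) hb)
    have h0 := sq_nonneg (u 0); have h1 := sq_nonneg (u 1)
    calc (a * u 0) ^ 2 + (b * u 1) ^ 2 = a ^ 2 * u 0 ^ 2 + b ^ 2 * u 1 ^ 2 := by ring
      _ ≤ C ^ 2 * u 0 ^ 2 + C ^ 2 * u 1 ^ 2 := by gcongr
      _ = C ^ 2 * (u 0 ^ 2 + u 1 ^ 2) := by ring
  calc Real.sqrt ((a * u 0) ^ 2 + (b * u 1) ^ 2) ≤ Real.sqrt (C ^ 2 * (u 0 ^ 2 + u 1 ^ 2)) :=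
        Real.sqrt_le_sqrt hub
    _ = C * Real.sqrt (u 0 ^ 2 + u 1 ^ 2) := by
        rw [Real.sqrt_mul (sq_nonneg C), Real.sqrt_sq hC]
    _ = C * 1 := by rw [← eNorm_two, hu]
    _ = C := mul_one C

lemma opNorm_Dm_le (r : ℝ) : opNorm (Dm r) ≤ Real.exp |r| := by
  unfold Dm
  apply opNorm_diag_le
  · rw [abs_of_pos (Real.exp_pos r)]
    exact Real.exp_le_exp.mpr (le_abs_self r)
  · rw [abs_of_pos (Real.exp_pos (-r))]
    exact Real.exp_le_exp.mpr (neg_le_abs r)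

lemma Dm_sub (r s : ℝ) : Dm r - Dm s = !![Real.exp r - Real.exp s, 0; 0,
    Real.exp (-r) - Real.exp (-s)] := by
  unfold Dm
  ext i j
  fin_cases i <;> fin_cases j <;> simp

/-- bound on the opNorm distance of two Dm's with small exponents -/
lemma opNorm_Dm_sub_le {r s : ℝ} (hr : |r| ≤ 1) (hs : |s| ≤ 1) :
    opNorm (Dm r - Dm s) ≤ 2 * |r| + 2 * |s| := by
  rw [Dm_sub]
  apply opNorm_diag_le
  · calc |Real.exp r - Real.exp s| = |(Real.exp r - 1) - (Real.exp s - 1)| := by ring_nf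
      _ ≤ |Real.exp r - 1| + |Real.exp s - 1| := abs_sub _ _
      _ ≤ 2 * |r| + 2 * |s| := add_le_add (Real.abs_exp_sub_one_le hr) (Real.abs_exp_sub_one_le hs)
  · calc |Real.exp (-r) - Real.exp (-s)| = |(Real.exp (-r) - 1) - (Real.exp (-s) - 1)| := by ring_nf
      _ ≤ |Real.exp (-r) - 1| + |Real.exp (-s) - 1| := abs_sub _ _
      _ ≤ 2 * |r| + 2 * |s| := by
          have h1 := Real.abs_exp_sub_one_le (x := -r) (by rwa [abs_neg])
          have h2 := Real.abs_exp_sub_one_le (x := -s) (by rwa [abs_neg])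
          rw [abs_neg] at h1 h2
          exact add_le_add h1 h2

end S12Dm

section S12Match

/-- `y` matches the pattern `p` with phase `t` on the window `|i| < k`. -/
def Matcht (p y : Seq 𝒜) (k : ℕ) (t : ℤ) : Prop := ∀ i : ℤ, i.natAbs < k → y i = p (i + t)

/-- `y` matches the pattern `p` with some phase on the window `|i| < k`. -/
def MatchW (p y : Seq 𝒜) (k : ℕ) : Prop := ∃ t : ℤ, Matcht p y k t

lemma matchW_zero (p y : Seq 𝒜) : MatchW p y 0 := ⟨0, fun i hi => absurd hi (by omega)⟩

lemma matcht_mono {p y : Seq 𝒜} {j k : ℕ} {t : ℤ} (hjk : j ≤ k) (h : Matcht p y k t) :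
    Matcht p y j t := fun i hi => h i (lt_of_lt_of_le hi hjk)

lemma matchW_mono {p y : Seq 𝒜} {j k : ℕ} (hjk : j ≤ k) (h : MatchW p y k) : MatchW p y j :=
  h.imp fun _ ht => matcht_mono hjk ht

lemma matcht_shift {p y : Seq 𝒜} {j : ℕ} {t : ℤ} (h : Matcht p y (j + 1) t) :
    Matcht p (shift y) j (t + 1) := by
  intro i hi
  show y (i + 1) = _
  have hb : (i + 1).natAbs < j + 1 := by omega
  rw [h (i + 1) hb]
  congr 1; ring

lemma matcht_unshift {p y : Seq 𝒜} {j : ℕ} {t : ℤ} (h : Matcht p (shift y) (j + 1) t) :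
    Matcht p y j (t - 1) := by
  intro i hi
  have hb : (i - 1).natAbs < j + 1 := by omega
  have := h (i - 1) hb
  show y i = _
  have hy : y i = (shift y) (i - 1) := by show y i = y (i - 1 + 1); congr 1; ring
  rw [hy, this]
  congr 1; ring

lemma matchW_shift {p y : Seq 𝒜} {j : ℕ} (h : MatchW p y (j + 1)) : MatchW p (shift y) j := by
  obtain ⟨t, ht⟩ := h
  exact ⟨t + 1, matcht_shift ht⟩

lemma matchW_unshift {p y : Seq 𝒜} {j : ℕ} (h : MatchW p (shift y) (j + 1)) : MatchW p y j := by
  obtain ⟨t, ht⟩ := h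
  exact ⟨t - 1, matcht_unshift ht⟩

lemma matcht_congr {p y y' : Seq 𝒜} {k : ℕ} {t : ℤ}
    (hagree : ∀ i : ℤ, i.natAbs < k → y i = y' i) (h : Matcht p y k t) : Matcht p y' k t :=
  fun i hi => (hagree i hi) ▸ h i hi

lemma matchW_congr {p y y' : Seq 𝒜} {k : ℕ}
    (hagree : ∀ i : ℤ, i.natAbs < k → y i = y' i) (h : MatchW p y k) : MatchW p y' k :=
  h.imp fun _ ht => matcht_congr hagree ht

section Periodic

variable {p : Seq 𝒜} {d : ℕ}

/-- multiples of the period can be added to the argument -/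
lemma periodic_add_mul (hper : ∀ i : ℤ, p (i + d) = p i) (i : ℤ) (q : ℤ) :
    p (i + d * q) = p i := by
  induction q using Int.induction_on with
  | zero => simp
  | succ q ih =>
      have : i + d * (q + 1) = (i + d * q) + d := by ring
      rw [this, hper, ih]
  | pred q ih =>
      have : (i + d * (-q - 1)) + d = i + d * (-q) := by ring
      have h2 := hper (i + d * (-q - 1))
      rw [this] at h2
      rw [h2] at ih
      exact ih

lemma matcht_mod (hper : ∀ i : ℤ, p (i + d) = p i) {y : Seq 𝒜} {k : ℕ} {t : ℤ}
    (h : Matcht p y k t) : Matcht p y k (t % d) := by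
  intro i hi
  rw [h i hi]
  have : i + t = (i + t % d) + d * (t / d) := by
    have := Int.mul_ediv_add_emod t d
    linarith
  rw [this, periodic_add_mul hper]

/-- a sequence matching `p` on every window is a translate of `p`. -/
lemma eq_phase_of_forall_matchW (hper : ∀ i : ℤ, p (i + d) = p i) (hd : 0 < d) {y : Seq 𝒜}
    (h : ∀ k, MatchW p y k) : ∃ t : ℤ, 0 ≤ t ∧ t < d ∧ y = fun i => p (i + t) := by
  have key : ∃ t : ℤ, 0 ≤ t ∧ t < d ∧ ∀ k, Matcht p y k t := by
    by_contra hc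
    push_neg at hc
    -- for each t in [0,d) choose a bad k
    have hex : ∀ t : ℤ, ∃ k : ℕ, (0 ≤ t → t < d → ¬ Matcht p y k t) := by
      intro t
      by_cases h0 : 0 ≤ t
      · by_cases h1 : t < d
        · obtain ⟨k, hk⟩ := hc t h0 h1
          exact ⟨k, fun _ _ => hk⟩
        · exact ⟨0, fun _ hh => absurd hh h1⟩
      · exact ⟨0, fun hh _ => absurd hh h0⟩
    choose kf hkf using hex
    set K := (Finset.Ico (0:ℤ) (d:ℤ)).sup fun t => kf t with hK
    obtain ⟨t, ht⟩ := h K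
    have ht' := matcht_mod hper ht
    have h0 : 0 ≤ t % d := Int.emod_nonneg t (by positivity)
    have h1 : t % d < d := Int.emod_lt_of_pos t (by exact_mod_cast hd)
    have hmem : t % d ∈ Finset.Ico (0:ℤ) (d:ℤ) := Finset.mem_Ico.mpr ⟨h0, h1⟩
    have hle : kf (t % d) ≤ K := Finset.le_sup hmem
    exact hkf (t % d) h0 h1 (matcht_mono hle ht')
  obtain ⟨t, h0, h1, hall⟩ := key
  refine ⟨t, h0, h1, funext fun i => ?_⟩
  exact hall (i.natAbs + 1) i (by omega)

end Periodic

/-! ### The function τ built from a profile `F` -/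

open Classical in
/-- τ(y) = F(c(y)) where c(y) is the largest matching window radius (0 if infinite). -/
noncomputable def tauF (p : Seq 𝒜) (F : ℕ → ℝ) (y : Seq 𝒜) : ℝ :=
  if h : ∃ k, ¬ MatchW p y k then F (Nat.find h - 1) else 0

open Classical in
lemma tauF_of_cinf {p : Seq 𝒜} (F : ℕ → ℝ) {y : Seq 𝒜} (h : ∀ k, MatchW p y k) :
    tauF p F y = 0 := by
  unfold tauF
  rw [dif_neg]
  push_neg
  exact fun k => h k

open Classical in
lemma tauF_of_exact {p : Seq 𝒜} (F : ℕ → ℝ) {y : Seq 𝒜} {k : ℕ}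
    (h1 : MatchW p y k) (h2 : ¬ MatchW p y (k + 1)) : tauF p F y = F k := by
  unfold tauF
  have hex : ∃ j, ¬ MatchW p y j := ⟨k + 1, h2⟩
  rw [dif_pos hex]
  have hfind : Nat.find hex = k + 1 := by
    rw [Nat.find_eq_iff]
    exact ⟨h2, fun j hj hneg => hneg (matchW_mono (by omega) h1)⟩
  rw [hfind]
  norm_num

open Classical in
lemma tauF_bounds {p : Seq 𝒜} {F : ℕ → ℝ} (hF : ∀ n, 0 ≤ F n ∧ F n ≤ 1) (y : Seq 𝒜) :
    0 ≤ tauF p F y ∧ tauF p F y ≤ 1 := by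
  unfold tauF
  split_ifs with h
  · exact hF _
  · norm_num

open Classical in
/-- value of τ via Nat.find when the matching radius is finite -/
lemma tauF_of_find {p : Seq 𝒜} (F : ℕ → ℝ) {y : Seq 𝒜} (h : ∃ k, ¬ MatchW p y k) :
    tauF p F y = F (Nat.find h - 1) := dif_pos h

open Classical in
lemma find_pos {p y : Seq 𝒜} (h : ∃ k, ¬ MatchW p y k) :
    0 < Nat.find h := by
  rcases Nat.eq_zero_or_pos (Nat.find h) with h0 | h0
  · exact absurd (matchW_zero p y) (h0 ▸ Nat.find_spec h)
  · exact h0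

end S12Match

section S12Cocycle

open Real

/-- the exponent function of our cocycle -/
noncomputable def ffun (p : Seq 𝒜) (F : ℕ → ℝ) (y : Seq 𝒜) : ℝ :=
  tauF p F (shift y) - tauF p F y

/-- the cocycle itself -/
noncomputable def Acoc (p : Seq 𝒜) (F : ℕ → ℝ) : Seq 𝒜 → GL (Fin 2) ℝ :=
  fun y => DmGL (ffun p F y)

lemma glMat_Acoc (p : Seq 𝒜) (F : ℕ → ℝ) (y : Seq 𝒜) :
    glMat (Acoc p F y) = Dm (ffun p F y) := rfl

lemma iterN_Acoc (p : Seq 𝒜) (F : ℕ → ℝ) : ∀ (n : ℕ) (x : Seq 𝒜),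
    glMat (iterN (Acoc p F) n x) = Dm (tauF p F (shift^[n] x) - tauF p F x) := by
  intro n
  induction n with
  | zero =>
      intro x
      show glMat 1 = _
      rw [glMat_one]
      simp [Dm_zero.symm]
  | succ n ih =>
      intro x
      show glMat (iterN (Acoc p F) n (shift x) * Acoc p F x) = _
      rw [glMat_mul, ih (shift x), glMat_Acoc]
      unfold ffun
      rw [Dm_mul]
      have h2 : shift^[n] (shift x) = shift^[n+1] x := (Function.iterate_succ_apply shift n x).symm
      rw [h2]
      congr 1
      ring

lemma iterZ_Acoc_eq (p : Seq 𝒜) (F : ℕ → ℝ) (n : ℤ) (x : Seq 𝒜) :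
    ∃ u v : Seq 𝒜, glMat (iterZ (Acoc p F) n x) = Dm (tauF p F u - tauF p F v) := by
  unfold iterZ
  split_ifs with h
  · exact ⟨shift^[n.toNat] x, x, iterN_Acoc p F n.toNat x⟩
  · refine ⟨shiftInv^[(-n).toNat] x, x, ?_⟩
    have hbase : glMat (iterN (Acoc p F) (-n).toNat (shiftInv^[(-n).toNat] x))
        = Dm (tauF p F x - tauF p F (shiftInv^[(-n).toNat] x)) := by
      rw [iterN_Acoc p F, shift_shiftInv_iterate]
    rw [glMat_inv_of_eq_Dm hbase]
    congr 1
    ring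

lemma opNorm_iterZ_Acoc_le (p : Seq 𝒜) {F : ℕ → ℝ} (hF0 : ∀ n, 0 ≤ F n ∧ F n ≤ 1)
    (n : ℤ) (x : Seq 𝒜) :
    opNorm (glMat (iterZ (Acoc p F) n x)) ≤ Real.exp 1 := by
  obtain ⟨u, v, huv⟩ := iterZ_Acoc_eq p F n x
  rw [huv]
  calc opNorm (Dm (tauF p F u - tauF p F v)) ≤ Real.exp |tauF p F u - tauF p F v| :=
        opNorm_Dm_le _
    _ ≤ Real.exp 1 := by
        apply Real.exp_le_exp.mpr
        have h1 := tauF_bounds (p := p) hF0 u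
        have h2 := tauF_bounds (p := p) hF0 v
        rw [abs_le]
        constructor <;> linarith

lemma det_Acoc (p : Seq 𝒜) (F : ℕ → ℝ) (x : Seq 𝒜) : (glMat (Acoc p F x)).det = 1 := by
  rw [glMat_Acoc]; exact Dm_det _

/-- closeness of values of F at nearby large indices -/
lemma F_close {F : ℕ → ℝ} (hF1 : ∀ ε : ℝ, 0 < ε → ∃ N, ∀ n ≥ N, |F (n+1) - F n| ≤ ε)
    {ε : ℝ} (hε : 0 < ε) : ∃ N, ∀ u v : ℕ, N ≤ u → N ≤ v → u ≤ v + 1 → v ≤ u + 1 →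
    |F u - F v| ≤ ε := by
  obtain ⟨N, hN⟩ := hF1 ε hε
  refine ⟨N, fun u v hu hv h1 h2 => ?_⟩
  have hcase : u = v ∨ u = v + 1 ∨ v = u + 1 := by omega
  rcases hcase with h | h | h
  · rw [h]; simp; linarith
  · rw [h]; exact hN v (by omega)
  · rw [h, abs_sub_comm]; exact hN u (by omega)

open Classical in
/-- Continuity of the cocycle. -/
lemma Acoc_continuous (H : 𝒜 → 𝒜 → Prop) (p : Seq 𝒜) {F : ℕ → ℝ}
    (hF0 : ∀ n, 0 ≤ F n ∧ F n ≤ 1)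
    (hF1 : ∀ ε : ℝ, 0 < ε → ∃ N, ∀ n ≥ N, |F (n+1) - F n| ≤ ε) :
    MatContinuousOn H (fun x => glMat (Acoc p F x)) := by
  intro x _ ε hε
  by_cases hx : ∃ k, ¬ MatchW p x k
  · -- locally constant case
    have hσx : ∃ k, ¬ MatchW p (shift x) k := by
      obtain ⟨k, hk⟩ := hx
      exact ⟨k + 1, fun hm => hk (matchW_unshift hm)⟩
    set m0 := Nat.find hx with hm0
    set m1 := Nat.find hσx with hm1
    set R := m0 + m1 + 5 with hR
    refine ⟨(2:ℝ)^(-(R:ℤ)), zpow_neg_pos R, ?_⟩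
    intro y _ hdist
    have hagree : ∀ i : ℤ, i.natAbs ≤ R → x i = y i := agree_of_seqDist_lt hdist
    -- the matching radius of y is the same as that of x
    have hy_ex : ∃ k, ¬ MatchW p y k := by
      refine ⟨m0, fun hm => Nat.find_spec hx ?_⟩
      exact matchW_congr (fun i hi => (hagree i (by omega)).symm) hm
    have hfy : Nat.find hy_ex = m0 := by
      rw [Nat.find_eq_iff]
      constructor
      · intro hm
        exact Nat.find_spec hx (matchW_congr (fun i hi => (hagree i (by omega)).symm) hm)
      · intro j hj hneg
        have hxj : MatchW p x j := by
          have := Nat.find_min hx hj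
          push_neg at this
          exact this
        exact hneg (matchW_congr (fun i hi => hagree i (by omega)) hxj)
    have hagreeσ : ∀ i : ℤ, i.natAbs ≤ R - 1 → (shift x) i = (shift y) i := by
      intro i hi
      show x (i+1) = y (i+1)
      exact hagree (i+1) (by omega)
    have hσy_ex : ∃ k, ¬ MatchW p (shift y) k := by
      refine ⟨m1, fun hm => Nat.find_spec hσx ?_⟩
      exact matchW_congr (fun i hi => (hagreeσ i (by omega)).symm) hm
    have hfσy : Nat.find hσy_ex = m1 := by
      rw [Nat.find_eq_iff]
      constructor
      · intro hm
        exact Nat.find_spec hσx (matchW_congr (fun i hi => (hagreeσ i (by omega)).symm) hm)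
      · intro j hj hneg
        have hxj : MatchW p (shift x) j := by
          have := Nat.find_min hσx hj
          push_neg at this
          exact this
        exact hneg (matchW_congr (fun i hi => hagreeσ i (by omega)) hxj)
    have heq : ffun p F y = ffun p F x := by
      unfold ffun
      rw [tauF_of_find F hy_ex, tauF_of_find F hσy_ex, tauF_of_find F hx, tauF_of_find F hσx]
      rw [hfy, hfσy]
    show opNorm (glMat (Acoc p F x) - glMat (Acoc p F y)) < ε
    rw [glMat_Acoc, glMat_Acoc, heq, sub_self]
    exact lt_of_le_of_lt opNorm_zero hε
  · -- phase case
    push_neg at hx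
    have hτx : tauF p F x = 0 := tauF_of_cinf F hx
    have hcσ : ∀ k, MatchW p (shift x) k := fun k => matchW_shift (hx (k+1))
    have hτσx : tauF p F (shift x) = 0 := tauF_of_cinf F hcσ
    have hffx : ffun p F x = 0 := by unfold ffun; rw [hτx, hτσx]; ring
    set εF := min (ε/3) 1 with hεF
    have hεFpos : 0 < εF := by
      apply lt_min _ one_pos
      linarith
    obtain ⟨N, hN⟩ := F_close hF1 hεFpos
    set R := N + 5 with hRdef
    refine ⟨(2:ℝ)^(-(R:ℤ)), zpow_neg_pos R, ?_⟩
    intro y _ hdist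
    have hagree : ∀ i : ℤ, i.natAbs ≤ R → x i = y i := agree_of_seqDist_lt hdist
    have hffy : |ffun p F y| ≤ εF := by
      by_cases hy : ∃ k, ¬ MatchW p y k
      · have hσy : ∃ k, ¬ MatchW p (shift y) k := by
          obtain ⟨k, hk⟩ := hy
          exact ⟨k + 1, fun hm => hk (matchW_unshift hm)⟩
        set my := Nat.find hy with hmydef
        set my' := Nat.find hσy with hmydef'
        have hlb : N + 4 ≤ my := by
          have : N + 3 < my := by
            rw [hmydef, Nat.lt_find_iff]
            intro m hm hneg
            apply hneg
            have hxm : MatchW p x m := hx m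
            exact matchW_congr (fun i hi => hagree i (by omega)) hxm
          omega
        have hub1 : my' ≤ my + 1 := by
          apply Nat.find_le
          intro hm
          exact Nat.find_spec hy (matchW_unshift hm)
        have hub2 : my ≤ my' + 1 := by
          apply Nat.find_le
          intro hm
          exact Nat.find_spec hσy (matchW_shift hm)
        have hτy : tauF p F y = F (my - 1) := tauF_of_find F hy
        have hτσy : tauF p F (shift y) = F (my' - 1) := tauF_of_find F hσy
        unfold ffun
        rw [hτy, hτσy]
        exact hN (my' - 1) (my - 1) (by omega) (by omega) (by omega) (by omega)
      · push_neg at hy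
        have h1 : tauF p F y = 0 := tauF_of_cinf F hy
        have h2 : tauF p F (shift y) = 0 := tauF_of_cinf F (fun k => matchW_shift (hy (k+1)))
        unfold ffun
        rw [h1, h2]
        simp
        linarith
    show opNorm (glMat (Acoc p F x) - glMat (Acoc p F y)) < ε
    rw [glMat_Acoc, glMat_Acoc]
    have hb : opNorm (Dm (ffun p F x) - Dm (ffun p F y)) ≤ 2 * |ffun p F x| + 2 * |ffun p F y| := by
      apply opNorm_Dm_sub_le
      · rw [hffx]; norm_num
      · calc |ffun p F y| ≤ εF := hffy
          _ ≤ 1 := min_le_right _ _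
    calc opNorm (Dm (ffun p F x) - Dm (ffun p F y)) ≤ 2 * |ffun p F x| + 2 * |ffun p F y| := hb
      _ ≤ 2 * 0 + 2 * εF := by
          rw [hffx]
          simp
          exact hffy
      _ ≤ 2 * (ε/3) := by
          have := min_le_left (ε/3) 1
          linarith
      _ < ε := by linarith

end S12Cocycle

section S12Ortho

open Real

/-- squared euclidean norm of the first row of `P' y` -/
noncomputable def kq (P' : Seq 𝒜 → GL (Fin 2) ℝ) (y : Seq 𝒜) : ℝ :=
  (glMat (P' y) 0 0)^2 + (glMat (P' y) 0 1)^2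

lemma mul_transpose_00 (Q : Matrix (Fin 2) (Fin 2) ℝ) :
    (Q * Qᵀ) 0 0 = Q 0 0 ^ 2 + Q 0 1 ^ 2 := by
  simp [Matrix.mul_apply, Fin.sum_univ_two, Matrix.transpose_apply]
  ring

lemma Dm_conj_00 (r : ℝ) (K : Matrix (Fin 2) (Fin 2) ℝ) :
    (Dm r * K * Dm r) 0 0 = Real.exp (2 * r) * K 0 0 := by
  obtain ⟨e00, e01, e10, e11⟩ := Dm_entries r
  rw [Matrix.mul_apply, Fin.sum_univ_two, Matrix.mul_apply, Matrix.mul_apply,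
    Fin.sum_univ_two, Fin.sum_univ_two, e00, e01, e10]
  rw [show (2:ℝ) * r = r + r by ring, Real.exp_add]
  ring

lemma star_eq_transpose (M : Matrix (Fin 2) (Fin 2) ℝ) : star M = Mᵀ := by
  ext i j
  rw [Matrix.star_apply, Matrix.transpose_apply, star_trivial]

lemma kq_pos (P' : Seq 𝒜 → GL (Fin 2) ℝ) (y : Seq 𝒜) : 0 < kq P' y := by
  set g := P' y with hgdef
  have hdet : (glMat g).det ≠ 0 := by
    intro h0
    have h1 : glMat g * glMat g⁻¹ = 1 := glMat_mul_inv g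
    have h2 : (glMat g).det * (glMat g⁻¹).det = 1 := by
      rw [← Matrix.det_mul, h1, Matrix.det_one]
    rw [h0, zero_mul] at h2
    exact zero_ne_one h2
  unfold kq
  by_contra hc
  push_neg at hc
  have ha : glMat (P' y) 0 0 = 0 := by nlinarith [sq_nonneg (glMat (P' y) 0 0), sq_nonneg (glMat (P' y) 0 1)]
  have hb : glMat (P' y) 0 1 = 0 := by nlinarith [sq_nonneg (glMat (P' y) 0 0), sq_nonneg (glMat (P' y) 0 1)]
  apply hdet
  rw [Matrix.det_fin_two]
  show glMat (P' y) 0 0 * glMat (P' y) 1 1 - glMat (P' y) 0 1 * glMat (P' y) 1 0 = 0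
  rw [ha, hb]
  ring

/-- The key consequence of pointwise orthogonality of the conjugated cocycle. -/
lemma kq_shift (p : Seq 𝒜) (F : ℕ → ℝ) {P' : Seq 𝒜 → GL (Fin 2) ℝ} {x : Seq 𝒜}
    (hx : glMat ((P' (shift x))⁻¹ * Acoc p F x * P' x) ∈ Matrix.orthogonalGroup (Fin 2) ℝ) :
    kq P' (shift x) = Real.exp (2 * ffun p F x) * kq P' x := by
  set g := (P' (shift x))⁻¹ * Acoc p F x * P' x with hg
  set M := glMat g with hMdef
  have hMstar : M * star M = 1 := (Matrix.mem_orthogonalGroup_iff (Fin 2) ℝ).mp hx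
  have hMt : M * Mᵀ = 1 := by rwa [star_eq_transpose] at hMstar
  have hMtM : Mᵀ * M = 1 := mul_eq_one_comm.mp hMt
  have hP : P' (shift x) = Acoc p F x * P' x * g⁻¹ := by
    rw [hg]
    group
  have hN : glMat g⁻¹ = Mᵀ := by
    have h1 : M * glMat g⁻¹ = 1 := glMat_mul_inv g
    calc glMat g⁻¹ = (Mᵀ * M) * glMat g⁻¹ := by rw [hMtM, one_mul]
      _ = Mᵀ * (M * glMat g⁻¹) := by rw [mul_assoc]
      _ = Mᵀ := by rw [h1, mul_one]
  have hPm : glMat (P' (shift x)) = Dm (ffun p F x) * glMat (P' x) * Mᵀ := by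
    rw [hP, glMat_mul, glMat_mul, glMat_Acoc, hN]
  set Q := glMat (P' x) with hQ
  set D := Dm (ffun p F x) with hD
  have hKey : glMat (P' (shift x)) * (glMat (P' (shift x)))ᵀ = D * (Q * Qᵀ) * D := by
    rw [hPm]
    have ht : (D * Q * Mᵀ)ᵀ = M * (Qᵀ * D) := by
      rw [Matrix.transpose_mul, Matrix.transpose_mul, Matrix.transpose_transpose]
      rw [hD, Dm_transpose]
    rw [ht]
    calc D * Q * Mᵀ * (M * (Qᵀ * D)) = D * Q * ((Mᵀ * M) * (Qᵀ * D)) := by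
          rw [mul_assoc (D * Q), ← mul_assoc Mᵀ M]
      _ = D * (Q * Qᵀ) * D := by
          rw [hMtM, one_mul]
          noncomm_ring

  have h00 : kq P' (shift x) = (glMat (P' (shift x)) * (glMat (P' (shift x)))ᵀ) 0 0 := by
    rw [mul_transpose_00]; rfl
  rw [h00, hKey, Dm_conj_00, mul_transpose_00]
  rfl

end S12Ortho

section S12Profile

omit [Fintype 𝒜] [DecidableEq 𝒜]

lemma min_one_lip {x y : ℝ} : |min 1 x - min 1 y| ≤ |x - y| := by
  have hxy1 : x - y ≤ |x - y| := le_abs_self _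
  have hxy2 : y - x ≤ |x - y| := by rw [abs_sub_comm]; exact le_abs_self _
  have habs : 0 ≤ |x - y| := abs_nonneg _
  rcases le_total x 1 with hx | hx <;> rcases le_total y 1 with hy | hy
  · rw [min_eq_right hx, min_eq_right hy]
  · rw [min_eq_right hx, min_eq_left hy, abs_le]
    constructor <;> linarith
  · rw [min_eq_left hx, min_eq_right hy, abs_le]
    constructor <;> linarith
  · rw [min_eq_left hx, min_eq_left hy]
    simp [habs]

/-- construction of the profile function with slow oscillation along a given unbounded set -/
lemma ramp_step {m c : ℝ} (hc : 0 < c) : |min 1 ((m+1)/c) - min 1 (m/c)| ≤ 1/c := by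
  have harg : (m+1)/c - m/c = 1/c := by field_simp; ring
  calc |min 1 ((m+1)/c) - min 1 (m/c)| ≤ |(m+1)/c - m/c| := min_one_lip
    _ = 1/c := by rw [harg, abs_of_pos (by positivity)]

lemma exists_profile (Kp : ℕ → Prop) (hK : ∀ B : ℕ, ∃ k, B < k ∧ Kp k) :
    ∃ (F : ℕ → ℝ) (a : ℕ → ℕ),
      (∀ n, 0 ≤ F n ∧ F n ≤ 1) ∧
      (∀ ε : ℝ, 0 < ε → ∃ N, ∀ n ≥ N, |F (n+1) - F n| ≤ ε) ∧
      StrictMono a ∧ (∀ i, Kp (a i)) ∧ (∀ i, Even i → F (a i) = 0) ∧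
      (∀ i, ¬ Even i → F (a i) = 1) := by
  classical
  choose g hg1 hg2 using hK
  set a : ℕ → ℕ := fun i => Nat.rec (g 0) (fun j aj => g (aj + j + 2)) i with ha
  have ha0 : a 0 = g 0 := rfl
  have haS : ∀ i, a (i + 1) = g (a i + i + 2) := fun i => rfl
  have hstep : ∀ i, a i + i + 2 < a (i + 1) := fun i => by rw [haS]; exact hg1 _
  have hmono : StrictMono a := strictMono_nat_of_lt_succ (fun i => by have := hstep i; omega)
  have hKp : ∀ i, Kp (a i) := by
    intro i
    cases i with
    | zero => exact hg2 0
    | succ j => rw [haS]; exact hg2 _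
  have hle_a : ∀ i, i ≤ a i := fun i => hmono.le_apply
  -- index function
  set idx : ℕ → ℕ := fun n => Nat.findGreatest (fun i => a i ≤ n) n with hidx
  have idx_spec : ∀ n, a 0 ≤ n → a (idx n) ≤ n := by
    intro n h0
    exact Nat.findGreatest_spec (P := fun i => a i ≤ n) (m := 0) (Nat.zero_le n) h0
  have idx_ge : ∀ n i, a i ≤ n → i ≤ idx n := by
    intro n i hi
    exact Nat.le_findGreatest (le_trans (hle_a i) hi) hi
  have idx_gt : ∀ n, a 0 ≤ n → n < a (idx n + 1) := by
    intro n h0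
    by_contra hc
    push_neg at hc
    have h1 : idx n + 1 ≤ idx n := idx_ge n (idx n + 1) hc
    omega
  have idx_at : ∀ i, idx (a i) = i := by
    intro i
    have h1 : i ≤ idx (a i) := idx_ge (a i) i le_rfl
    have h2 : idx (a i) ≤ i := by
      by_contra hc
      push_neg at hc
      have := idx_spec (a i) (hmono.monotone (Nat.zero_le i))
      have h3 : a i < a (idx (a i)) := hmono hc
      omega
    omega
  -- the ramp and the profile
  set ramp : ℕ → ℕ → ℝ := fun i n => min 1 (((n - a i : ℕ) : ℝ) / ((i:ℝ) + 1)) with hramp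
  set F : ℕ → ℝ := fun n =>
    if a 0 ≤ n then (if Even (idx n) then ramp (idx n) n else 1 - ramp (idx n) n) else 0
    with hF
  have ramp_nonneg : ∀ i n, 0 ≤ ramp i n := by
    intro i n
    simp only [hramp]
    apply le_min zero_le_one
    positivity
  have ramp_le_one : ∀ i n, ramp i n ≤ 1 := fun i n => min_le_left _ _
  have hbounds : ∀ n, 0 ≤ F n ∧ F n ≤ 1 := by
    intro n
    simp only [hF]
    split_ifs with h1 h2
    · exact ⟨ramp_nonneg _ _, ramp_le_one _ _⟩
    · constructor
      · linarith [ramp_le_one (idx n) n]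
      · linarith [ramp_nonneg (idx n) n]
    · norm_num
  have hat : ∀ i, F (a i) = if Even i then 0 else 1 := by
    intro i
    have h0 : a 0 ≤ a i := hmono.monotone (Nat.zero_le i)
    have hr : ramp i (a i) = 0 := by
      simp only [hramp]
      simp
    simp only [hF, if_pos h0, idx_at, hr]
    split_ifs <;> norm_num
  -- the increment bound
  have hinc : ∀ n, a 0 ≤ n → |F (n+1) - F n| ≤ 1 / ((idx n : ℝ) + 1) := by
    intro n h0
    set i := idx n with hi
    have hspec : a i ≤ n := idx_spec n h0
    have hgt : n < a (i + 1) := idx_gt n h0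
    have h0' : a 0 ≤ n + 1 := le_trans h0 (Nat.le_succ n)
    have hcase : idx (n+1) = i ∨ (idx (n+1) = i + 1 ∧ a (i+1) = n+1) := by
      by_cases hc : a (i+1) ≤ n + 1
      · right
        have he : a (i+1) = n+1 := by omega
        constructor
        · have hub : idx (n+1) ≤ i + 1 := by
            by_contra hcc
            push_neg at hcc
            have := idx_spec (n+1) h0'
            have h3 : a (i+1) < a (idx (n+1)) := hmono hcc
            omega
          have hlb : i + 1 ≤ idx (n+1) := idx_ge (n+1) (i+1) hc
          omega
        · exact he
      · left
        push_neg at hc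
        have hub : idx (n+1) ≤ i := by
          by_contra hcc
          push_neg at hcc
          have := idx_spec (n+1) h0'
          have h3 : a (i+1) ≤ a (idx (n+1)) := hmono.monotone hcc
          omega
        have hlb : i ≤ idx (n+1) := idx_ge (n+1) i (by omega)
        omega
    rcases hcase with hc | ⟨hc, he⟩
    · -- same ramp interval
      have hFn1 : F (n+1) = if Even i then ramp i (n+1) else 1 - ramp i (n+1) := by
        simp only [hF, if_pos h0', hc]
      have hFn : F n = if Even i then ramp i n else 1 - ramp i n := by
        simp only [hF, if_pos h0, ← hi]
      have hd : |ramp i (n+1) - ramp i n| ≤ 1 / ((i:ℝ) + 1) := by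
        have hcast : ((n + 1 - a i : ℕ) : ℝ) = ((n - a i : ℕ) : ℝ) + 1 := by
          have he' : n + 1 - a i = (n - a i) + 1 := by omega
          rw [he']
          push_cast
          ring
        simp only [hramp]
        rw [hcast]
        exact ramp_step (by positivity)
      rw [hFn1, hFn]
      split_ifs with hev
      · exact hd
      · calc |1 - ramp i (n+1) - (1 - ramp i n)| = |ramp i n - ramp i (n+1)| := by ring_nf
          _ = |ramp i (n+1) - ramp i n| := abs_sub_comm _ _
          _ ≤ 1 / ((i:ℝ)+1) := hd
    · -- crossing to the next ramp interval
      have hramp_full : ramp i n = 1 := by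
        simp only [hramp]
        apply min_eq_left
        rw [le_div_iff₀ (by positivity : (0:ℝ) < (i:ℝ)+1)]
        have hn : a i + i + 1 ≤ n := by
          have := hstep i
          omega
        have hsub : (i + 1 : ℕ) ≤ n - a i := by omega
        calc (1:ℝ) * ((i:ℝ)+1) = ((i+1 : ℕ) : ℝ) := by push_cast; ring
          _ ≤ ((n - a i : ℕ) : ℝ) := by exact_mod_cast Nat.cast_le.mpr hsub
      have hFn : F n = if Even i then 1 else 0 := by
        simp only [hF, if_pos h0, ← hi, hramp_full]
        split_ifs <;> norm_num
      have hFn1 : F (n+1) = if Even (i+1) then 0 else 1 := by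
        rw [← he]
        exact hat (i+1)
      rw [hFn, hFn1]
      by_cases hev : Even i
      · rw [if_pos hev, if_neg (by simp [Nat.even_add_one, hev])]
        rw [sub_self, abs_zero]
        positivity
      · rw [if_neg hev, if_pos (Nat.even_add_one.mpr hev)]
        rw [zero_sub, abs_neg, abs_zero]
        positivity
  -- increments tend to zero
  have hF1 : ∀ ε : ℝ, 0 < ε → ∃ N, ∀ n ≥ N, |F (n+1) - F n| ≤ ε := by
    intro ε hε
    obtain ⟨i0, hi0⟩ := exists_nat_gt (1/ε)
    have hlt : 1 / ((i0:ℝ) + 1) ≤ ε := by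
      have h2 : 1 / ε < (i0:ℝ) + 1 := lt_of_lt_of_le hi0 (by linarith)
      have h3 : 1 < ((i0:ℝ) + 1) * ε := (div_lt_iff₀ hε).mp h2
      rw [div_le_iff₀ (by positivity : (0:ℝ) < (i0:ℝ) + 1)]
      linarith
    refine ⟨a i0, fun n hn => ?_⟩
    have h0 : a 0 ≤ n := le_trans (hmono.monotone (Nat.zero_le i0)) hn
    have hidxn : i0 ≤ idx n := idx_ge n i0 hn
    calc |F (n+1) - F n| ≤ 1/((idx n : ℝ) + 1) := hinc n h0
      _ ≤ 1/((i0:ℝ) + 1) := by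
          apply one_div_le_one_div_of_le (by positivity)
          have : (i0:ℝ) ≤ (idx n : ℝ) := by exact_mod_cast hidxn
          linarith
      _ ≤ ε := hlt
  refine ⟨F, a, hbounds, hF1, hmono, hKp, ?_, ?_⟩
  · intro i hi
    rw [hat i, if_pos hi]
  · intro i hi
    rw [hat i, if_neg hi]

end S12Profile

section S12Periodic

lemma SFT_shiftZ {H : 𝒜 → 𝒜 → Prop} {x : Seq 𝒜} (hx : x ∈ SFT H) (k : ℤ) :
    shiftZ k x ∈ SFT H := by
  intro i
  show H (x (i + k)) (x (i + 1 + k))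
  have : i + 1 + k = (i + k) + 1 := by ring
  rw [this]
  exact hx (i + k)

lemma seqDist_pos {x y : Seq 𝒜} (h : x ≠ y) : 0 < seqDist x y := by
  unfold seqDist
  rw [if_neg h]
  positivity

/-- Existence of a periodic point in a nonempty SFT. -/
lemma exists_periodic {H : 𝒜 → 𝒜 → Prop} {x₀ : Seq 𝒜} (hx₀ : x₀ ∈ SFT H) :
    ∃ (p : Seq 𝒜) (d : ℕ), 0 < d ∧ p ∈ SFT H ∧ (∀ i : ℤ, p (i + d) = p i) := by
  classical
  set f : Fin (Fintype.card 𝒜 + 1) → 𝒜 := fun i => x₀ ((i : ℕ) : ℤ) with hf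
  obtain ⟨i, j, hne, heq⟩ := Fintype.exists_ne_map_eq_of_card_lt f (by simp)
  have key : ∃ (av : ℤ) (dv : ℕ), 0 < dv ∧ x₀ av = x₀ (av + dv) := by
    rcases Nat.lt_or_ge i.val j.val with h | h
    · refine ⟨(i.val : ℤ), j.val - i.val, by omega, ?_⟩
      have hcast : (i.val : ℤ) + ((j.val - i.val : ℕ) : ℤ) = (j.val : ℤ) := by
        push_cast
        omega
      rw [hcast]
      exact heq
    · have hlt : j.val < i.val := by
        rcases Nat.lt_or_ge j.val i.val with h2 | h2
        · exact h2
        · exfalso; apply hne; ext; omega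
      refine ⟨(j.val : ℤ), i.val - j.val, by omega, ?_⟩
      have hcast : (j.val : ℤ) + ((i.val - j.val : ℕ) : ℤ) = (i.val : ℤ) := by
        push_cast
        omega
      rw [hcast]
      exact heq.symm
  obtain ⟨av, dv, hdv, hav⟩ := key
  set p : Seq 𝒜 := fun n => x₀ (av + (n % (dv : ℤ))) with hp
  have hdz : (0:ℤ) < (dv : ℤ) := by exact_mod_cast hdv
  refine ⟨p, dv, hdv, ?_, ?_⟩
  · -- p ∈ SFT H
    intro n
    have hr0 : 0 ≤ n % (dv : ℤ) := Int.emod_nonneg n (by omega)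
    have hr1 : n % (dv : ℤ) < dv := Int.emod_lt_of_pos n hdz
    set r := n % (dv : ℤ) with hrdef
    have hsucc : (n + 1) % (dv : ℤ) = (r + 1) % (dv : ℤ) := by
      have h1 : (n + 1) % (dv:ℤ) = (n % (dv:ℤ) + 1 % (dv:ℤ)) % (dv:ℤ) := Int.add_emod n 1 dv
      have h2 : (r + 1) % (dv:ℤ) = (r % (dv:ℤ) + 1 % (dv:ℤ)) % (dv:ℤ) := Int.add_emod r 1 dv
      have h3 : r % (dv:ℤ) = r := Int.emod_eq_of_lt hr0 hr1
      rw [h1, h2, h3, hrdef]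
    rcases lt_or_ge (r + 1) (dv : ℤ) with hlt | hge
    · have hmod : (n + 1) % (dv : ℤ) = r + 1 := by
        rw [hsucc, Int.emod_eq_of_lt (by omega) hlt]
      show H (x₀ (av + r)) (x₀ (av + (n+1) % (dv : ℤ)))
      rw [hmod]
      have : av + (r + 1) = (av + r) + 1 := by ring
      rw [this]
      exact hx₀ (av + r)
    · have hreq : r + 1 = (dv : ℤ) := by omega
      have hmod : (n + 1) % (dv : ℤ) = 0 := by
        rw [hsucc, hreq, Int.emod_self]
      show H (x₀ (av + r)) (x₀ (av + (n+1) % (dv : ℤ)))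
      rw [hmod, add_zero, hav]
      have : av + (dv : ℤ) = (av + r) + 1 := by omega
      rw [this]
      exact hx₀ (av + r)
  · -- periodicity
    intro n
    show x₀ (av + (n + dv) % (dv:ℤ)) = x₀ (av + n % (dv:ℤ))
    congr 2
    simp [Int.add_emod]

/-- If the whole forward orbit of the transitive point lies in a finite set,
the entropy vanishes. -/
lemma not_entropy_pos_of_finite_orbit {H : 𝒜 → 𝒜 → Prop} {x₀ : Seq 𝒜} (hx₀ : x₀ ∈ SFT H)
    (hdense : ∀ y ∈ SFT H, ∀ ε : ℝ, 0 < ε → ∃ n : ℕ, seqDist (shift^[n] x₀) y < ε)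
    (S : Set (Seq 𝒜)) (hS : S.Finite) (horb : ∀ n : ℕ, shift^[n] x₀ ∈ S) :
    ¬ (0 < entropy (SFT H)) := by
  classical
  -- SFT H ⊆ S
  have hsub : SFT H ⊆ S := by
    intro y hy
    by_contra hyS
    have hSne : hS.toFinset.Nonempty := ⟨shift^[0] x₀, hS.mem_toFinset.mpr (horb 0)⟩
    set T := hS.toFinset.image (fun s => seqDist s y) with hT
    have hTne : T.Nonempty := hSne.image _
    set ε := T.min' hTne with hε
    have hεpos : 0 < ε := by
      apply (Finset.lt_min'_iff T hTne).mpr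
      intro b hb
      obtain ⟨s, hs, rfl⟩ := Finset.mem_image.mp hb
      apply seqDist_pos
      intro hcon
      rw [hcon] at hs
      exact hyS (hS.mem_toFinset.mp hs)
    obtain ⟨n, hn⟩ := hdense y hy ε hεpos
    have hmem : seqDist (shift^[n] x₀) y ∈ T :=
      Finset.mem_image.mpr ⟨shift^[n] x₀, hS.mem_toFinset.mpr (horb n), rfl⟩
    have := T.min'_le _ hmem
    rw [← hε] at this
    linarith
  -- word count is bounded
  haveI : Finite ↥S := hS.to_subtype
  set L := Nat.card ↥S with hL
  have hwc : ∀ n : ℕ, wordCount (SFT H) n ≤ L := by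
    intro n
    unfold wordCount
    set W := {w : Fin n → 𝒜 // ∃ x ∈ SFT H, ∃ k : ℤ, ∀ i : Fin n, x (k + (i : ℤ)) = w i} with hW
    have : ∀ w : W, ∃ z : Seq 𝒜, z ∈ S ∧ ∀ i : Fin n, z (i : ℤ) = w.val i := by
      rintro ⟨w, hw⟩
      obtain ⟨x, hx, k, hk⟩ := hw
      refine ⟨shiftZ k x, hsub (SFT_shiftZ hx k), fun i => ?_⟩
      show x ((i : ℤ) + k) = w i
      rw [add_comm]
      exact hk i
    choose φ hφ1 hφ2 using this
    have hinj : Function.Injective (fun w : W => (⟨φ w, hφ1 w⟩ : ↥S)) := by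
      intro w w' hww
      have heq : φ w = φ w' := congrArg Subtype.val hww
      apply Subtype.ext
      funext i
      rw [← hφ2 w i, ← hφ2 w' i, heq]
    exact Nat.card_le_card_of_injective _ hinj
  -- the word count is at least 1
  have hwc1 : ∀ n : ℕ, 1 ≤ wordCount (SFT H) n := by
    intro n
    unfold wordCount
    haveI hne : Nonempty {w : Fin n → 𝒜 // ∃ x ∈ SFT H, ∃ k : ℤ, ∀ i : Fin n, x (k + (i : ℤ)) = w i} :=
      ⟨⟨fun i => x₀ ((i : ℕ) : ℤ), x₀, hx₀, 0, fun i => by simp⟩⟩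
    exact Nat.card_pos
  have hL1 : 1 ≤ L := le_trans (hwc1 0) (hwc 0)
  -- entropy ≤ 0
  set u : ℕ → ℝ := fun n => Real.log (wordCount (SFT H) n : ℝ) / (n : ℝ) with hu
  have hu0 : ∀ n, 0 ≤ u n := by
    intro n
    apply div_nonneg _ (Nat.cast_nonneg n)
    apply Real.log_nonneg
    exact_mod_cast hwc1 n
  have hloglog : ∀ n, Real.log (wordCount (SFT H) n : ℝ) ≤ Real.log (L : ℝ) := by
    intro n
    apply Real.log_le_log (by exact_mod_cast hwc1 n)
    exact_mod_cast hwc n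
  have hent_le : ∀ ε : ℝ, 0 < ε → entropy (SFT H) ≤ ε := by
    intro ε hε
    unfold entropy
    apply Filter.limsup_le_of_le (isCoboundedUnder_le_of_le atTop hu0)
    have hNn : ∀ᶠ n : ℕ in Filter.atTop, (max 1 ⌈Real.log (L : ℝ) / ε⌉₊) ≤ n :=
      Filter.eventually_ge_atTop _
    filter_upwards [hNn] with n hn
    have hn1 : 1 ≤ n := le_trans (le_max_left _ _) hn
    have hnpos : (0:ℝ) < (n:ℝ) := by exact_mod_cast hn1
    have hceil : Real.log (L : ℝ) / ε ≤ (n : ℝ) := by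
      calc Real.log (L : ℝ) / ε ≤ (⌈Real.log (L : ℝ) / ε⌉₊ : ℝ) := Nat.le_ceil _
        _ ≤ (n : ℝ) := by exact_mod_cast le_trans (le_max_right _ _) hn
    have hlogle : Real.log (L : ℝ) ≤ ε * n := by
      rw [div_le_iff₀ hε] at hceil
      linarith
    calc Real.log (wordCount (SFT H) n : ℝ) / (n : ℝ) ≤ Real.log (L : ℝ) / (n : ℝ) := by
          gcongr
          all_goals first
            | (exact_mod_cast hwc1 n)
            | (exact hwc n)
            | exact hloglog n
      _ ≤ ε := by
          rw [div_le_iff₀ hnpos]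
          linarith
  intro hpos
  have h2 : entropy (SFT H) ≤ entropy (SFT H) / 2 := hent_le _ (by linarith)
  linarith

end S12Periodic

section S12KqCont

lemma kq_close {H : 𝒜 → 𝒜 → Prop} {P' : Seq 𝒜 → GL (Fin 2) ℝ}
    (hcont : MatContinuousOn H (fun x => glMat (P' x))) {z : Seq 𝒜} (hz : z ∈ SFT H) :
    ∀ ε : ℝ, 0 < ε → ∃ δ : ℝ, 0 < δ ∧ ∀ y ∈ SFT H, seqDist z y < δ →
      |kq P' y - kq P' z| < ε := by
  intro ε hε
  set az := glMat (P' z) 0 0 with haz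
  set bz := glMat (P' z) 0 1 with hbz
  set ε' := min 1 (ε / (2 * (|az| + |bz|) + 5)) with hε'
  have hden : (0:ℝ) < 2 * (|az| + |bz|) + 5 := by positivity
  have hε'pos : 0 < ε' := lt_min one_pos (by positivity)
  obtain ⟨δ, hδpos, hδ⟩ := hcont z hz ε' hε'pos
  refine ⟨δ, hδpos, fun y hy hdist => ?_⟩
  have hop := hδ y hy hdist
  set ay := glMat (P' y) 0 0 with hay
  set by' := glMat (P' y) 0 1 with hby
  have hsub0 : (glMat (P' z) - glMat (P' y)) 0 0 = az - ay := by
    rw [Matrix.sub_apply]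
  have hsub1 : (glMat (P' z) - glMat (P' y)) 0 1 = bz - by' := by
    rw [Matrix.sub_apply]
  have ha : |az - ay| < ε' := by
    calc |az - ay| = |(glMat (P' z) - glMat (P' y)) 0 0| := by rw [hsub0]
      _ ≤ opNorm (glMat (P' z) - glMat (P' y)) := abs_entry_le_opNorm _ 0 0
      _ < ε' := hop
  have hb : |bz - by'| < ε' := by
    calc |bz - by'| = |(glMat (P' z) - glMat (P' y)) 0 1| := by rw [hsub1]
      _ ≤ opNorm (glMat (P' z) - glMat (P' y)) := abs_entry_le_opNorm _ 0 1
      _ < ε' := hop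
  have hε'le1 : ε' ≤ 1 := min_le_left _ _
  have hε'le : ε' ≤ ε / (2 * (|az| + |bz|) + 5) := min_le_right _ _
  have hkq : kq P' y - kq P' z = (ay - az) * (ay + az) + (by' - bz) * (by' + bz) := by
    unfold kq
    rw [← hay, ← hby, ← haz, ← hbz]
    ring
  have haya : |ay| ≤ |az| + 1 := by
    have := abs_sub_abs_le_abs_sub ay az
    have h2 : |ay - az| < ε' := by rwa [abs_sub_comm]
    linarith
  have hbya : |by'| ≤ |bz| + 1 := by
    have := abs_sub_abs_le_abs_sub by' bz
    have h2 : |by' - bz| < ε' := by rwa [abs_sub_comm]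
    linarith
  calc |kq P' y - kq P' z| = |(ay - az) * (ay + az) + (by' - bz) * (by' + bz)| := by rw [hkq]
    _ ≤ |(ay - az) * (ay + az)| + |(by' - bz) * (by' + bz)| := abs_add_le _ _
    _ = |ay - az| * |ay + az| + |by' - bz| * |by' + bz| := by rw [abs_mul, abs_mul]
    _ ≤ ε' * (2 * |az| + 1) + ε' * (2 * |bz| + 1) := by
        have h1 : |ay + az| ≤ 2 * |az| + 1 := by
          calc |ay + az| ≤ |ay| + |az| := abs_add_le _ _
            _ ≤ 2 * |az| + 1 := by linarith
        have h2 : |by' + bz| ≤ 2 * |bz| + 1 := by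
          calc |by' + bz| ≤ |by'| + |bz| := abs_add_le _ _
            _ ≤ 2 * |bz| + 1 := by linarith
        have h3 : |ay - az| ≤ ε' := by rw [abs_sub_comm]; exact ha.le
        have h4 : |by' - bz| ≤ ε' := by rw [abs_sub_comm]; exact hb.le
        exact add_le_add (mul_le_mul h3 h1 (abs_nonneg _) hε'pos.le)
          (mul_le_mul h4 h2 (abs_nonneg _) hε'pos.le)
    _ = ε' * (2 * (|az| + |bz|) + 2) := by ring
    _ < ε := by
        have hfrac : ε' * (2 * (|az| + |bz|) + 2) ≤ (ε / (2 * (|az| + |bz|) + 5)) * (2 * (|az| + |bz|) + 2) := by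
          apply mul_le_mul_of_nonneg_right hε'le (by positivity)
        have hlast : (ε / (2 * (|az| + |bz|) + 5)) * (2 * (|az| + |bz|) + 2) < ε := by
          rw [div_mul_eq_mul_div, div_lt_iff₀ hden]
          nlinarith [abs_nonneg az, abs_nonneg bz]
        linarith

end S12KqCont

/-- Example 5.2. Over every transitive SFT with positive topological
entropy there is a continuous `SL(2,ℝ)` cocycle all of whose fiberwise products are
uniformly bounded, yet which is not continuously conjugate to an isometric cocycle. -/
theorem statement12 {𝒜 : Type*} [Fintype 𝒜] [DecidableEq 𝒜]
    (H : 𝒜 → 𝒜 → Prop) (hTrans : IsTransitive H) (hEnt : 0 < entropy (SFT H)) :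
    ∃ A : Seq 𝒜 → GL (Fin 2) ℝ,
      (∀ x ∈ SFT H, (glMat (A x)).det = 1) ∧
      MatContinuousOn H (fun x => glMat (A x)) ∧
      (∃ C : ℝ, ∀ x ∈ SFT H, ∀ n : ℤ, opNorm (glMat (iterZ A n x)) ≤ C) ∧
      ¬ ConjIsometric H A := by
  classical
  obtain ⟨x₀, hx₀, hdense⟩ := hTrans
  obtain ⟨p, d, hd, hp, hper⟩ := exists_periodic hx₀
  by_cases hA : ∃ (n : ℕ) (t : ℤ), shift^[n] x₀ = (fun i => p (i + t))
  · -- degenerate case: the transitive orbit hits a periodic phase, so entropy vanishes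
    exfalso
    obtain ⟨n₀, t₀, hn₀⟩ := hA
    set Phases : Set (Seq 𝒜) := (fun t : ℤ => (fun i : ℤ => p (i + t))) '' (Set.Ico (0:ℤ) (d:ℤ))
      with hPh
    set S : Set (Seq 𝒜) := ((fun m : ℕ => shift^[m] x₀) '' (Set.Iio n₀)) ∪ Phases with hSdef
    have hphase_mod : ∀ t : ℤ, (fun i : ℤ => p (i + t)) = fun i : ℤ => p (i + t % d) := by
      intro t
      funext i
      have harg : i + t = (i + t % d) + d * (t / d) := by
        have := Int.mul_ediv_add_emod t d
        linarith
      rw [harg, periodic_add_mul hper]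
    have hphase_mem : ∀ t : ℤ, (fun i : ℤ => p (i + t)) ∈ Phases := by
      intro t
      rw [hphase_mod t]
      refine ⟨t % d, ?_, rfl⟩
      have h0 : 0 ≤ t % d := Int.emod_nonneg t (by exact_mod_cast hd.ne')
      have h1 : t % d < d := Int.emod_lt_of_pos t (by exact_mod_cast hd)
      exact Set.mem_Ico.mpr ⟨h0, h1⟩
    have hSfin : S.Finite :=
      Set.Finite.union ((Set.finite_Iio n₀).image _) ((Set.finite_Ico 0 (d:ℤ)).image _)
    have horb : ∀ m : ℕ, shift^[m] x₀ ∈ S := by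
      intro m
      rcases lt_or_ge m n₀ with h | h
      · exact Or.inl ⟨m, h, rfl⟩
      · right
        have hm : m = (m - n₀) + n₀ := by omega
        have hiter : shift^[m] x₀ = shift^[m - n₀] (shift^[n₀] x₀) := by
          conv_lhs => rw [hm]
          exact Function.iterate_add_apply shift (m - n₀) n₀ x₀
        rw [hiter, hn₀]
        have hsh : shift^[m - n₀] (fun i : ℤ => p (i + t₀))
            = fun i : ℤ => p (i + (t₀ + ((m - n₀ : ℕ) : ℤ))) := by
          funext i
          rw [shift_iterate_apply]
          show p ((i + (m - n₀ : ℕ)) + t₀) = _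
          congr 1
          ring
        rw [hsh]
        exact hphase_mem _
    exact not_entropy_pos_of_finite_orbit hx₀ hdense S hSfin horb hEnt
  · -- main case
    push_neg at hA
    have hfin : ∀ n : ℕ, ∃ k, ¬ MatchW p (shift^[n] x₀) k := by
      intro n
      by_contra hc
      push_neg at hc
      obtain ⟨t, _, _, ht⟩ := eq_phase_of_forall_matchW hper hd hc
      exact hA n t ht
    set good : ℕ → ℕ → Prop := fun k t => ∃ n : ℕ,
      Matcht p (shift^[n] x₀) k (t : ℤ) ∧ ¬ MatchW p (shift^[n] x₀) (k+1) with hgood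
    have hunb : ∀ B : ℕ, ∃ k, B < k ∧ ∃ t, t < d ∧ good k t := by
      intro B
      have hpos : (0:ℝ) < 2^(-((B+4 : ℕ)):ℤ) := zpow_neg_pos _
      obtain ⟨n, hn⟩ := hdense p hp _ hpos
      set y := shift^[n] x₀ with hy
      have hagree : ∀ i : ℤ, i.natAbs ≤ B+4 → y i = p i := agree_of_seqDist_lt hn
      have hmB : MatchW p y (B+5) := by
        refine ⟨0, fun i hi => ?_⟩
        rw [show i + (0:ℤ) = i by ring]
        exact hagree i (by omega)
      set m := Nat.find (hfin n) with hm
      have hmlt : B+5 < m := by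
        rw [hm, Nat.lt_find_iff]
        intro j hj hneg
        exact hneg (matchW_mono hj hmB)
      have hk1 : MatchW p y (m - 1) := by
        have hfm := Nat.find_min (hfin n) (show m - 1 < m by omega)
        rw [not_not] at hfm
        exact hfm
      obtain ⟨t', ht'⟩ := hk1
      have htmod := matcht_mod hper ht'
      have h0 : 0 ≤ t' % d := Int.emod_nonneg t' (by exact_mod_cast hd.ne')
      have h1 : t' % d < d := Int.emod_lt_of_pos t' (by exact_mod_cast hd)
      refine ⟨m - 1, by omega, (t' % d).toNat, by omega, n, ?_, ?_⟩
      · have hcast : (((t' % d).toNat : ℕ) : ℤ) = t' % d := Int.toNat_of_nonneg h0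
        rw [hcast]
        exact htmod
      · have hmm : m - 1 + 1 = m := by omega
        rw [hmm]
        exact Nat.find_spec (hfin n)
    have hstar : ∃ t, t < d ∧ ∀ B, ∃ k, B < k ∧ good k t := by
      by_contra hc
      push_neg at hc
      have hc' : ∀ t, ∃ B, t < d → ∀ k, B < k → ¬ good k t := by
        intro t
        by_cases h : t < d
        · obtain ⟨B, hB⟩ := hc t h
          exact ⟨B, fun _ k hk => hB k hk⟩
        · exact ⟨0, fun hh => absurd hh h⟩
      choose Bf hBf using hc'
      set Bstar := (Finset.range d).sup Bf with hBstar
      obtain ⟨k, hkB, t, htd, hgd⟩ := hunb Bstar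
      have hle : Bf t ≤ Bstar := Finset.le_sup (Finset.mem_range.mpr htd)
      exact hBf t htd k (by omega) hgd
    obtain ⟨tstar, htstar, hKunb⟩ := hstar
    obtain ⟨F, a, hF0, hF1, hamono, haK, haeven, haodd⟩ :=
      exists_profile (fun k => good k tstar) hKunb
    refine ⟨Acoc p F, fun x _ => det_Acoc p F x, Acoc_continuous H p hF0 hF1,
      ⟨Real.exp 1, fun x _ n => opNorm_iterZ_Acoc_le p hF0 n x⟩, ?_⟩
    rintro ⟨P', hP'cont, hP'orth⟩
    set ψ : Seq 𝒜 → ℝ := fun y => kq P' y * Real.exp (-(2 * tauF p F y)) with hψ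
    have hψstep : ∀ x ∈ SFT H, ψ (shift x) = ψ x := by
      intro x hx
      have hk := kq_shift p F (hP'orth x hx)
      show kq P' (shift x) * Real.exp (-(2 * tauF p F (shift x)))
          = kq P' x * Real.exp (-(2 * tauF p F x))
      calc kq P' (shift x) * Real.exp (-(2 * tauF p F (shift x)))
          = (Real.exp (2 * ffun p F x) * kq P' x) * Real.exp (-(2 * tauF p F (shift x))) := by
            rw [hk]
        _ = kq P' x * (Real.exp (2 * ffun p F x) * Real.exp (-(2 * tauF p F (shift x)))) := by
            ring
        _ = kq P' x * Real.exp (2 * ffun p F x + -(2 * tauF p F (shift x))) := by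
            rw [Real.exp_add]
        _ = kq P' x * Real.exp (-(2 * tauF p F x)) := by
            congr 1
            unfold ffun
            ring
    have horbψ : ∀ n : ℕ, ψ (shift^[n] x₀) = ψ x₀ := by
      intro n
      induction n with
      | zero => rfl
      | succ n ih =>
          rw [Function.iterate_succ_apply', hψstep _ (SFT_shift_iterate hx₀ n), ih]
    set z : Seq 𝒜 := fun i => p (i + (tstar : ℤ)) with hz
    have hzS : z ∈ SFT H := by
      intro i
      show H (p (i + (tstar:ℤ))) (p (i + 1 + (tstar:ℤ)))
      have harg : i + 1 + (tstar:ℤ) = (i + (tstar:ℤ)) + 1 := by ring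
      rw [harg]
      exact hp (i + (tstar:ℤ))
    have hψ0pos : 0 < ψ x₀ := mul_pos (kq_pos P' x₀) (Real.exp_pos _)
    have hkey : ∀ i : ℕ, ∃ w : Seq 𝒜, w ∈ SFT H ∧ seqDist z w ≤ 2^(-(a i : ℤ)) ∧
        kq P' w = ψ x₀ * Real.exp (2 * F (a i)) := by
      intro i
      obtain ⟨n, hmt, hnm⟩ := haK i
      set w := shift^[n] x₀ with hw
      have hwS : w ∈ SFT H := SFT_shift_iterate hx₀ n
      have hτw : tauF p F w = F (a i) := tauF_of_exact F ⟨(tstar:ℤ), hmt⟩ hnm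
      have hdist : seqDist z w ≤ 2^(-(a i:ℤ)) := by
        rw [seqDist_comm]
        apply seqDist_le_of_agree
        intro j hj
        rw [hmt j hj]
      have hψw : ψ w = ψ x₀ := horbψ n
      have hrec : ψ w * Real.exp (2 * tauF p F w) = kq P' w := by
        show (kq P' w * Real.exp (-(2 * tauF p F w))) * Real.exp (2 * tauF p F w) = kq P' w
        rw [mul_assoc, ← Real.exp_add,
          show -(2 * tauF p F w) + 2 * tauF p F w = 0 by ring, Real.exp_zero, mul_one]
      refine ⟨w, hwS, hdist, ?_⟩
      rw [← hrec, hψw, hτw]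
    have hval : ∀ c : ℝ, (∀ i₀ : ℕ, ∃ i, i₀ ≤ i ∧ Real.exp (2 * F (a i)) = c) →
        kq P' z = ψ x₀ * c := by
      intro c hc
      by_contra hne
      set ε := |kq P' z - ψ x₀ * c| with hεdef
      have hεpos : 0 < ε := abs_pos.mpr (sub_ne_zero.mpr hne)
      obtain ⟨δ, hδpos, hδ⟩ := kq_close hP'cont hzS ε hεpos
      obtain ⟨m, hm⟩ := exists_pow_lt_of_lt_one hδpos (by norm_num : (1:ℝ)/2 < 1)
      obtain ⟨i, hi_ge, hival⟩ := hc m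
      have hai : m ≤ a i := le_trans hi_ge hamono.le_apply
      obtain ⟨w, hwS, hwd, hwv⟩ := hkey i
      have hdlt : seqDist z w < δ := by
        have hmon : (2:ℝ)^(-(a i:ℤ)) ≤ (2:ℝ)^(-(m:ℤ)) :=
          zpow_le_zpow_right₀ one_le_two (by omega)
        have heq2 : (2:ℝ)^(-(m:ℤ)) = ((1:ℝ)/2)^m := by
          rw [_root_.zpow_neg, one_div, inv_pow]
          norm_num
        calc seqDist z w ≤ (2:ℝ)^(-(a i:ℤ)) := hwd
          _ ≤ (2:ℝ)^(-(m:ℤ)) := hmon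
          _ = ((1:ℝ)/2)^m := heq2
          _ < δ := hm
      have hclose := hδ w hwS hdlt
      rw [hwv, hival] at hclose
      have hfinal : |kq P' z - ψ x₀ * c| < ε := by
        rw [abs_sub_comm]
        exact hclose
      rw [← hεdef] at hfinal
      exact lt_irrefl _ hfinal
    have h1 : kq P' z = ψ x₀ * 1 := by
      apply hval
      intro i₀
      refine ⟨2 * i₀, by omega, ?_⟩
      rw [haeven (2 * i₀) ⟨i₀, by ring⟩]
      norm_num
    have h2 : kq P' z = ψ x₀ * Real.exp 2 := by
      apply hval
      intro i₀
      refine ⟨2 * i₀ + 1, by omega, ?_⟩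
      have hodd : ¬ Even (2 * i₀ + 1) := by
        rw [Nat.even_add_one]
        exact not_not_intro ⟨i₀, by ring⟩
      rw [haodd _ hodd]
      norm_num
    have hee : (2:ℝ) + 1 ≤ Real.exp 2 := Real.add_one_le_exp 2
    nlinarith [hψ0pos, h1.symm.trans h2]
end Paper
end

section
/- Let 𝒢 ⊂ SL(d,ℝ) be a finite set. Then the semigroup generated by 𝒢 has a quasi-conformal branch if and only if there exists a nonempty set 𝒰 ⊂ SL(d,ℝ) with compact closure such that cl(𝒰) ⊂ 𝒢^{−1}𝒰. -/
open Filter Topology Matrix Pointwise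

namespace Paper

variable {𝒜 : Type*} [Fintype 𝒜] [DecidableEq 𝒜]

variable {d : ℕ}

section QCBranch

variable {d : ℕ}

/-- The product `D_k ⋯ D_1` of the first `k` terms of a sequence of matrices. -/
def seqProd (D : ℕ → Matrix (Fin d) (Fin d) ℝ) (k : ℕ) : Matrix (Fin d) (Fin d) ℝ :=
  (((List.range k).map D).reverse).prod

/-- The semigroup generated by `𝒢 ⊆ SL(d,ℝ)` has a quasi-conformal branch. -/
def HasQCBranch (𝒢 : Set (Matrix (Fin d) (Fin d) ℝ)) : Prop :=
  ∃ D : ℕ → Matrix (Fin d) (Fin d) ℝ, (∀ i : ℕ, D i ∈ 𝒢) ∧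
    ∃ C : ℝ, ∀ k : ℕ, opNorm (seqProd D k) * opNorm (seqProd D k)⁻¹ ≤ C

/-!
Along a branch with bounded condition number the products `P_k = D_k ⋯ D_1` have determinant one,
so `‖P_k⁻¹‖` is bounded below and the `P_k` stay bounded. Their closure is the required `𝒰`: a
limit `L` of the `P_k` is, by finiteness of `𝒢`, a limit of products `P_k` with `D_k = g` fixed,
so `g L` is a limit of the `P_{k+1}` and `L ∈ g⁻¹ 𝒰`.

Conversely, `cl 𝒰 ⊆ 𝒢⁻¹ 𝒰` lets every `u ∈ 𝒰` step to some `g u ∈ 𝒰`; iterating from `u₀ ∈ 𝒰`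
gives a branch with `P_k u₀ ∈ 𝒰`. Then `P_k = (P_k u₀) u₀⁻¹` and
`P_k⁻¹ = u₀ adj(P_k u₀)` range over continuous images of the compact set `cl 𝒰`.
-/

lemma seqProd_zero (D : ℕ → Matrix (Fin d) (Fin d) ℝ) : seqProd D 0 = 1 := by
  simp [seqProd]

lemma seqProd_succ (D : ℕ → Matrix (Fin d) (Fin d) ℝ) (k : ℕ) :
    seqProd D (k + 1) = D k * seqProd D k := by
  simp [seqProd, List.range_succ]

lemma det_seqProd {D : ℕ → Matrix (Fin d) (Fin d) ℝ} (hD : ∀ i, (D i).det = 1) (k : ℕ) :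
    (seqProd D k).det = 1 := by
  induction k with
  | zero => rw [seqProd_zero, det_one]
  | succ k ih => rw [seqProd_succ, det_mul, hD, ih, one_mul]

lemma inv_eq_adjugate_of_det_eq_one {n R : Type*} [Fintype n] [DecidableEq n] [CommRing R]
    {M : Matrix n n R} (h : M.det = 1) : M⁻¹ = M.adjugate := by
  rw [inv_def, h, Ring.inverse_one, one_smul]

lemma mem_inv_mul_iff_exists_mul_mem {n R : Type*} [Fintype n] [DecidableEq n] [CommRing R]
    {𝒢 𝒰 : Set (Matrix n n R)} (h𝒢 : ∀ g ∈ 𝒢, IsUnit g.det) {L : Matrix n n R} :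
    L ∈ 𝒢⁻¹ * 𝒰 ↔ ∃ g ∈ 𝒢, g * L ∈ 𝒰 := by
  constructor
  · rintro ⟨a, ha, b, hb, rfl⟩
    have hadet : IsUnit a.det := isUnit_nonsing_inv_det_iff.1 (h𝒢 _ ha)
    refine ⟨a⁻¹, ha, ?_⟩
    rwa [← Matrix.mul_assoc, nonsing_inv_mul a hadet, Matrix.one_mul]
  · rintro ⟨g, hg, hgL⟩
    refine ⟨g⁻¹, ?_, g * L, hgL, ?_⟩
    · rwa [Set.mem_inv, nonsing_inv_nonsing_inv g (h𝒢 g hg)]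
    · show g⁻¹ * (g * L) = L
      rw [← Matrix.mul_assoc, nonsing_inv_mul g (h𝒢 g hg), Matrix.one_mul]

theorem exists_mul_mem_closure_range {M : Type*} [TopologicalSpace M] [Mul M] [ContinuousMul M]
    {𝒢 : Set M} (h𝒢 : 𝒢.Finite) {D P : ℕ → M} (hD : ∀ k, D k ∈ 𝒢)
    (hP : ∀ k, P (k + 1) = D k * P k) {L : M} (hL : L ∈ closure (Set.range P)) :
    ∃ g ∈ 𝒢, g * L ∈ closure (Set.range P) := by
  have hsplit : Set.range P = ⋃ g ∈ 𝒢, P '' {k | D k = g} := by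
    ext x
    simp only [Set.mem_range, Set.mem_iUnion, Set.mem_image, Set.mem_ofPred_eq, exists_prop]
    exact ⟨fun ⟨k, hk⟩ => ⟨D k, hD k, k, rfl, hk⟩, fun ⟨_, _, k, _, hk⟩ => ⟨k, hk⟩⟩
  rw [hsplit, h𝒢.closure_biUnion, Set.mem_iUnion₂] at hL
  obtain ⟨g, hg, hLg⟩ := hL
  refine ⟨g, hg, map_mem_closure (continuous_const_mul g) hLg ?_⟩
  rintro _ ⟨k, hk, rfl⟩
  exact ⟨k + 1, by rw [hP, hk]⟩

theorem exists_seqProd_mul_mem {𝒢 𝒰 : Set (Matrix (Fin d) (Fin d) ℝ)}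
    (hstep : ∀ u ∈ 𝒰, ∃ g ∈ 𝒢, g * u ∈ 𝒰) {u₀ : Matrix (Fin d) (Fin d) ℝ} (hu₀ : u₀ ∈ 𝒰) :
    ∃ D : ℕ → Matrix (Fin d) (Fin d) ℝ, (∀ k, D k ∈ 𝒢) ∧ ∀ k, seqProd D k * u₀ ∈ 𝒰 := by
  choose! g hg hgu using hstep
  let u : ℕ → Matrix (Fin d) (Fin d) ℝ := fun k => Nat.rec u₀ (fun _ v => g v * v) k
  have hu : ∀ k, u k ∈ 𝒰 := by
    intro k
    induction k with
    | zero => exact hu₀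
    | succ k ih => exact hgu _ ih
  refine ⟨fun k => g (u k), fun k => hg _ (hu k), fun k => ?_⟩
  suffices seqProd (fun k => g (u k)) k * u₀ = u k from this ▸ hu k
  induction k with
  | zero => rw [seqProd_zero, Matrix.one_mul]; rfl
  | succ k ih => rw [seqProd_succ, Matrix.mul_assoc, ih]

open scoped Matrix.Norms.L2Operator

lemma eNorm_eq_norm_toLp (u : Fin d → ℝ) : eNorm u = ‖WithLp.toLp 2 u‖ := by
  simp [eNorm, EuclideanSpace.norm_eq]

theorem opNorm_eq_l2_opNorm (M : Matrix (Fin d) (Fin d) ℝ) : opNorm M = ‖M‖ := by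
  rw [Matrix.cstar_norm_def M, ← ContinuousLinearMap.sSup_sphere_eq_norm, opNorm]
  congr 1
  ext r
  constructor
  · rintro ⟨u, hu, rfl⟩
    refine ⟨WithLp.toLp 2 u, ?_, ?_⟩
    · simpa [eNorm_eq_norm_toLp] using hu
    · simp [eNorm_eq_norm_toLp, toEuclideanCLM_toLp]
  · rintro ⟨x, hx, rfl⟩
    refine ⟨x.ofLp, ?_, ?_⟩
    · simpa [eNorm_eq_norm_toLp] using hx
    · rw [eNorm_eq_norm_toLp, ← toEuclideanCLM_toLp, WithLp.toLp_ofLp]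

theorem exists_pos_le_norm_of_det_eq_one (n : Type*) [Fintype n] [DecidableEq n] [Nonempty n] :
    ∃ δ > 0, ∀ M : Matrix n n ℝ, M.det = 1 → δ ≤ ‖M‖ := by
  -- `det` is continuous and vanishes at `0`, so it stays below `1` near `0`.
  have hdet : Continuous fun M : Matrix n n ℝ => M.det := continuous_id.matrix_det
  obtain ⟨δ, hδ, hball⟩ := Metric.continuousAt_iff.mp (hdet.continuousAt (x := 0)) 1 one_pos
  refine ⟨δ, hδ, fun M hM => not_lt.mp fun hlt => ?_⟩
  have := hball (x := M) (by simpa using hlt)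
  simp [hM, det_zero] at this

theorem isBounded_of_det_eq_one_of_norm_mul_norm_inv_le {n : Type*} [Fintype n] [DecidableEq n]
    {S : Set (Matrix n n ℝ)} (hdet : ∀ M ∈ S, M.det = 1) {C : ℝ}
    (hC : ∀ M ∈ S, ‖M‖ * ‖M⁻¹‖ ≤ C) : Bornology.IsBounded S := by
  cases isEmpty_or_nonempty n
  · exact Set.subsingleton_of_subsingleton.finite.isBounded
  obtain ⟨δ, hδ, hle⟩ := exists_pos_le_norm_of_det_eq_one n
  refine isBounded_iff_forall_norm_le.mpr ⟨C / δ, fun M hM => ?_⟩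
  rw [le_div_iff₀ hδ]
  calc ‖M‖ * δ ≤ ‖M‖ * ‖M⁻¹‖ := by
        gcongr
        exact hle _ (by rw [det_nonsing_inv, hdet M hM, Ring.inverse_one])
    _ ≤ C := hC M hM

theorem hasQCBranch_of_isBounded {𝒢 : Set (Matrix (Fin d) (Fin d) ℝ)}
    {D : ℕ → Matrix (Fin d) (Fin d) ℝ} (hD : ∀ k, D k ∈ 𝒢)
    (hbdd : Bornology.IsBounded (Set.range (seqProd D)))
    (hbdd_inv : Bornology.IsBounded (Set.range fun k => (seqProd D k)⁻¹)) : HasQCBranch 𝒢 := by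
  obtain ⟨B, hB⟩ := isBounded_iff_forall_norm_le.mp hbdd
  obtain ⟨B', hB'⟩ := isBounded_iff_forall_norm_le.mp hbdd_inv
  refine ⟨D, hD, B * B', fun k => ?_⟩
  rw [opNorm_eq_l2_opNorm, opNorm_eq_l2_opNorm]
  exact mul_le_mul (hB _ ⟨k, rfl⟩) (hB' _ ⟨k, rfl⟩) (norm_nonneg _)
    ((norm_nonneg _).trans (hB _ ⟨k, rfl⟩))

theorem HasQCBranch.exists_closure_subset_inv_mul {𝒢 : Set (Matrix (Fin d) (Fin d) ℝ)}
    (h𝒢fin : 𝒢.Finite) (h𝒢SL : ∀ g ∈ 𝒢, g.det = 1) (h : HasQCBranch 𝒢) :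
    ∃ 𝒰 : Set (Matrix (Fin d) (Fin d) ℝ), 𝒰.Nonempty ∧ (∀ u ∈ 𝒰, u.det = 1) ∧
      IsCompact (closure 𝒰) ∧ closure 𝒰 ⊆ 𝒢⁻¹ * 𝒰 := by
  obtain ⟨D, hD, C, hC⟩ := h
  have hdet : ∀ k, (seqProd D k).det = 1 := det_seqProd fun k => h𝒢SL _ (hD k)
  have hbdd : Bornology.IsBounded (Set.range (seqProd D)) :=
    isBounded_of_det_eq_one_of_norm_mul_norm_inv_le (Set.forall_mem_range.2 hdet) (C := C)
      (Set.forall_mem_range.2 fun k => by simpa only [opNorm_eq_l2_opNorm] using hC k)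
  refine ⟨closure (Set.range (seqProd D)), (Set.range_nonempty _).closure, fun u hu => ?_,
    by rw [closure_closure]; exact hbdd.isCompact_closure, ?_⟩
  · exact closure_minimal (Set.forall_mem_range.2 hdet)
      (isClosed_eq continuous_id.matrix_det continuous_const) hu
  · rw [closure_closure]
    intro L hL
    exact (mem_inv_mul_iff_exists_mul_mem fun g hg => (h𝒢SL g hg) ▸ isUnit_one).2
      (exists_mul_mem_closure_range h𝒢fin hD (seqProd_succ D) hL)

theorem hasQCBranch_of_closure_subset_inv_mul {𝒢 𝒰 : Set (Matrix (Fin d) (Fin d) ℝ)}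
    (h𝒢SL : ∀ g ∈ 𝒢, g.det = 1) (h𝒰 : 𝒰.Nonempty) (h𝒰SL : ∀ u ∈ 𝒰, u.det = 1)
    (hcpt : IsCompact (closure 𝒰)) (hsub : closure 𝒰 ⊆ 𝒢⁻¹ * 𝒰) : HasQCBranch 𝒢 := by
  obtain ⟨u₀, hu₀⟩ := h𝒰
  have hstep : ∀ u ∈ 𝒰, ∃ g ∈ 𝒢, g * u ∈ 𝒰 := fun u hu =>
    (mem_inv_mul_iff_exists_mul_mem fun g hg => (h𝒢SL g hg) ▸ isUnit_one).1
      (hsub (subset_closure hu))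
  obtain ⟨D, hD, horbit⟩ := exists_seqProd_mul_mem hstep hu₀
  have hu₀unit : IsUnit u₀.det := (h𝒰SL u₀ hu₀) ▸ isUnit_one
  have hright : Continuous fun M : Matrix (Fin d) (Fin d) ℝ => M * u₀⁻¹ :=
    continuous_id.matrix_mul continuous_const
  have hleft_adj : Continuous fun M : Matrix (Fin d) (Fin d) ℝ => u₀ * M.adjugate :=
    continuous_const.matrix_mul continuous_id.matrix_adjugate
  refine hasQCBranch_of_isBounded hD ?_ ?_
  · refine (hcpt.image hright).isBounded.subset ?_
    rintro _ ⟨k, rfl⟩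
    refine ⟨_, subset_closure (horbit k), ?_⟩
    dsimp only
    rw [Matrix.mul_assoc, mul_nonsing_inv _ hu₀unit, Matrix.mul_one]
  · refine (hcpt.image hleft_adj).isBounded.subset ?_
    rintro _ ⟨k, rfl⟩
    refine ⟨_, subset_closure (horbit k), ?_⟩
    dsimp only
    rw [← inv_eq_adjugate_of_det_eq_one (h𝒰SL _ (horbit k)), Matrix.mul_inv_rev,
      ← Matrix.mul_assoc, mul_nonsing_inv _ hu₀unit, Matrix.one_mul]

/-- Lemma 3.1, [FNR]. For a finite `𝒢 ⊆ SL(d,ℝ)`, the semigroup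
`⟨𝒢⟩⁺` has a quasi-conformal branch iff there is a nonempty `𝒰 ⊆ SL(d,ℝ)` with compact
closure such that `cl(𝒰) ⊆ 𝒢⁻¹𝒰`. -/
theorem statement14 (𝒢 : Set (Matrix (Fin d) (Fin d) ℝ)) (h𝒢fin : 𝒢.Finite)
    (h𝒢SL : ∀ g ∈ 𝒢, g.det = 1) :
    HasQCBranch 𝒢 ↔
      ∃ 𝒰 : Set (Matrix (Fin d) (Fin d) ℝ), 𝒰.Nonempty ∧ (∀ u ∈ 𝒰, u.det = 1) ∧
        IsCompact (closure 𝒰) ∧ closure 𝒰 ⊆ 𝒢⁻¹ * 𝒰 :=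
  ⟨HasQCBranch.exists_closure_subset_inv_mul h𝒢fin h𝒢SL,
    fun ⟨_, h𝒰, h𝒰SL, hcpt, hsub⟩ => hasQCBranch_of_closure_subset_inv_mul h𝒢SL h𝒰 h𝒰SL hcpt hsub⟩

end QCBranch

end Paper
end
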